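/- arXiv:1102.1952 — 7 statements merged into one kernel-verified Lean document; each statement's English description precedes it below -/
import Mathlib

section
/- Let M : (0,∞) → (0,∞) be continuous and nonincreasing with M(t) → +∞ as t → 0⁺. Define the Legendre transform L(M)(x) := inf_{τ>0} (xτ + M(τ)) and the Köhlbecker transform K(M)(x) := −log( x · ∫₀^∞ e^{−(xt + M(t))} dt ). Then K(M)(x)/L(M)(x) → 1 as x → +∞. -/
/-!
Write `I(x) = x ∫₀^∞ e^{-(xt + M t)} dt`, so that `K = -log I`. Since `M` is nonincreasing, the
integrand is at least `e^{-(xτ + M τ) - 1}` on `(τ, τ + 1/x]`, whence `K ≤ L + 1`. Conversely,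
`xt + M t ≥ εxt + L((1 - ε)x)` gives `I(x) ≤ ε⁻¹ e^{-L((1 - ε)x)}`, and `L((1 - ε)x) ≥ (1 - ε) L(x)`
because `M ≥ 0`, whence `K ≥ (1 - ε) L + log ε`. As `M(0⁺) = ∞` forces `L → ∞`, dividing by `L`
squeezes `K / L` to `1`.
-/

open MeasureTheory Filter Set Real Topology

noncomputable def legendreTransform (M : ℝ → ℝ) (x : ℝ) : ℝ :=
  ⨅ τ : Ioi (0 : ℝ), x * τ + M τ

noncomputable def kohlbeckerIntegral (M : ℝ → ℝ) (x : ℝ) : ℝ :=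
  x * ∫ t in Ioi (0 : ℝ), exp (-(x * t + M t))

section Legendre

variable {M : ℝ → ℝ}

lemma bddBelow_range_mul_add (hM : ∀ t > 0, 0 ≤ M t) {x : ℝ} (hx : 0 ≤ x) :
    BddBelow (range fun τ : Ioi (0 : ℝ) => x * τ + M τ) :=
  ⟨0, by rintro _ ⟨τ, rfl⟩; exact add_nonneg (mul_nonneg hx τ.2.le) (hM τ τ.2)⟩

lemma legendreTransform_le (hM : ∀ t > 0, 0 ≤ M t) {x τ : ℝ} (hx : 0 ≤ x) (hτ : 0 < τ) :
    legendreTransform M x ≤ x * τ + M τ :=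
  ciInf_le (bddBelow_range_mul_add hM hx) ⟨τ, hτ⟩

lemma le_legendreTransform {x b : ℝ} (h : ∀ τ > 0, b ≤ x * τ + M τ) :
    b ≤ legendreTransform M x :=
  le_ciInf fun τ => h τ τ.2

lemma mul_legendreTransform_le (hM : ∀ t > 0, 0 ≤ M t) {x c : ℝ} (hx : 0 ≤ x) (hc₀ : 0 ≤ c)
    (hc₁ : c ≤ 1) : c * legendreTransform M x ≤ legendreTransform M (c * x) :=
  le_legendreTransform fun τ hτ =>
    calc c * legendreTransform M x ≤ c * (x * τ + M τ) :=
          mul_le_mul_of_nonneg_left (legendreTransform_le hM hx hτ) hc₀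
      _ ≤ c * x * τ + M τ := by nlinarith [hM τ hτ]

lemma tendsto_legendreTransform_atTop (hM : ∀ t > 0, 0 ≤ M t)
    (hlim : Tendsto M (𝓝[>] 0) atTop) : Tendsto (legendreTransform M) atTop atTop := by
  refine tendsto_atTop.2 fun b => ?_
  obtain ⟨t₀, ht₀, hbM⟩ := mem_nhdsGT_iff_exists_Ioc_subset.1 (hlim.eventually_ge_atTop b)
  filter_upwards [eventually_ge_atTop (b / t₀), eventually_ge_atTop 0] with x hbx hx
  refine le_legendreTransform fun τ hτ => ?_
  rcases le_or_gt τ t₀ with hτt₀ | ht₀τ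
  · have : b ≤ M τ := hbM ⟨hτ, hτt₀⟩
    nlinarith [mul_nonneg hx hτ.le]
  · have : b ≤ x * t₀ := (div_le_iff₀ (mem_Ioi.1 ht₀)).1 hbx
    nlinarith [hM τ hτ]

end Legendre

section Kohlbecker

variable {M : ℝ → ℝ}

lemma integrableOn_exp_neg_mul_add (hM : ∀ t > 0, 0 ≤ M t)
    (hmeas : AEMeasurable M (volume.restrict (Ioi 0))) {x : ℝ} (hx : 0 < x) :
    IntegrableOn (fun t => exp (-(x * t + M t))) (Ioi 0) := by
  refine (exp_neg_integrableOn_Ioi 0 hx).mono'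
    (measurable_exp.comp_aemeasurable ((aemeasurable_id.const_mul x).add hmeas).neg
      ).aestronglyMeasurable ?_
  filter_upwards [ae_restrict_mem measurableSet_Ioi] with t ht
  rw [norm_of_nonneg (exp_pos _).le, neg_mul]
  exact exp_le_exp.2 (by linarith [hM t ht])

lemma exp_neg_sub_one_le_kohlbeckerIntegral (hM : ∀ t > 0, 0 ≤ M t)
    (hmeas : AEMeasurable M (volume.restrict (Ioi 0))) (hanti : AntitoneOn M (Ioi 0))
    {x τ : ℝ} (hx : 0 < x) (hτ : 0 < τ) :
    exp (-(x * τ + M τ) - 1) ≤ kohlbeckerIntegral M x := by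
  set c := exp (-(x * τ + M τ) - 1)
  have hsub : Ioc τ (τ + 1 / x) ⊆ Ioi 0 := fun t ht => hτ.trans ht.1
  have hint := integrableOn_exp_neg_mul_add hM hmeas hx
  have hbound : 1 / x * c ≤ ∫ t in Ioi (0 : ℝ), exp (-(x * t + M t)) :=
    calc 1 / x * c = ∫ _ in Ioc τ (τ + 1 / x), c := by
          rw [setIntegral_const, measureReal_def, volume_Ioc, add_sub_cancel_left,
            ENNReal.toReal_ofReal (by positivity), smul_eq_mul]
      _ ≤ ∫ t in Ioc τ (τ + 1 / x), exp (-(x * t + M t)) := by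
          refine setIntegral_mono_on (integrableOn_const measure_Ioc_lt_top.ne)
            (hint.mono_set hsub) measurableSet_Ioc fun t ht => exp_le_exp.2 ?_
          have hMt : M t ≤ M τ := hanti hτ (hsub ht) ht.1.le
          have hxt : x * t ≤ x * τ + 1 := by
            have := mul_le_mul_of_nonneg_left ht.2 hx.le
            rwa [mul_add, mul_one_div_cancel hx.ne'] at this
          linarith
      _ ≤ ∫ t in Ioi (0 : ℝ), exp (-(x * t + M t)) :=
          setIntegral_mono_set hint (.of_forall fun _ => (exp_pos _).le) hsub.eventuallyLE
  calc c = x * (1 / x * c) := by field_simp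
    _ ≤ kohlbeckerIntegral M x := mul_le_mul_of_nonneg_left hbound hx.le

lemma kohlbeckerIntegral_le (hM : ∀ t > 0, 0 ≤ M t)
    (hmeas : AEMeasurable M (volume.restrict (Ioi 0))) {ε x : ℝ} (hε₀ : 0 < ε) (hε₁ : ε ≤ 1)
    (hx : 0 < x) :
    kohlbeckerIntegral M x ≤ ε⁻¹ * exp (-legendreTransform M ((1 - ε) * x)) := by
  set ℓ := legendreTransform M ((1 - ε) * x)
  have hεx : 0 < ε * x := by positivity
  have hpointwise : ∀ t ∈ Ioi (0 : ℝ), exp (-(x * t + M t)) ≤ exp (-(ε * x) * t) * exp (-ℓ) := by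
    intro t ht
    rw [← exp_add]
    refine exp_le_exp.2 ?_
    have := legendreTransform_le hM (by nlinarith : 0 ≤ (1 - ε) * x) ht
    linarith
  have hbound : ∫ t in Ioi (0 : ℝ), exp (-(x * t + M t)) ≤ (ε * x)⁻¹ * exp (-ℓ) :=
    calc ∫ t in Ioi (0 : ℝ), exp (-(x * t + M t))
        ≤ ∫ t in Ioi (0 : ℝ), exp (-(ε * x) * t) * exp (-ℓ) :=
          setIntegral_mono_on (integrableOn_exp_neg_mul_add hM hmeas hx)
            ((exp_neg_integrableOn_Ioi 0 hεx).mul_const _) measurableSet_Ioi hpointwise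
      _ = (ε * x)⁻¹ * exp (-ℓ) := by
          rw [integral_mul_const, integral_exp_mul_Ioi (by linarith), mul_zero, exp_zero]
          field_simp
  calc kohlbeckerIntegral M x ≤ x * ((ε * x)⁻¹ * exp (-ℓ)) :=
        mul_le_mul_of_nonneg_left hbound hx.le
    _ = ε⁻¹ * exp (-ℓ) := by field_simp

lemma kohlbeckerIntegral_pos (hM : ∀ t > 0, 0 ≤ M t)
    (hmeas : AEMeasurable M (volume.restrict (Ioi 0))) (hanti : AntitoneOn M (Ioi 0)) {x : ℝ}
    (hx : 0 < x) : 0 < kohlbeckerIntegral M x :=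
  (exp_pos _).trans_le (exp_neg_sub_one_le_kohlbeckerIntegral hM hmeas hanti hx one_pos)

lemma neg_log_kohlbeckerIntegral_le (hM : ∀ t > 0, 0 ≤ M t)
    (hmeas : AEMeasurable M (volume.restrict (Ioi 0))) (hanti : AntitoneOn M (Ioi 0)) {x : ℝ}
    (hx : 0 < x) : -log (kohlbeckerIntegral M x) ≤ legendreTransform M x + 1 := by
  suffices -log (kohlbeckerIntegral M x) - 1 ≤ legendreTransform M x by linarith
  refine le_legendreTransform fun τ hτ => ?_
  have := (le_log_iff_exp_le (kohlbeckerIntegral_pos hM hmeas hanti hx)).2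
    (exp_neg_sub_one_le_kohlbeckerIntegral hM hmeas hanti hx hτ)
  linarith

lemma le_neg_log_kohlbeckerIntegral (hM : ∀ t > 0, 0 ≤ M t)
    (hmeas : AEMeasurable M (volume.restrict (Ioi 0))) (hanti : AntitoneOn M (Ioi 0))
    {ε x : ℝ} (hε₀ : 0 < ε) (hε₁ : ε ≤ 1) (hx : 0 < x) :
    (1 - ε) * legendreTransform M x + log ε ≤ -log (kohlbeckerIntegral M x) := by
  have hlog := log_le_log (kohlbeckerIntegral_pos hM hmeas hanti hx)
    (kohlbeckerIntegral_le hM hmeas hε₀ hε₁ hx)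
  rw [log_mul (inv_ne_zero hε₀.ne') (exp_ne_zero _), log_exp, log_inv] at hlog
  have := mul_legendreTransform_le hM hx.le (sub_nonneg.2 hε₁) (sub_le_self 1 hε₀.le)
  linarith

end Kohlbecker

lemma tendsto_div_nhds_one_of_bounds {α : Type*} {l : Filter α} {f g : α → ℝ}
    (hg : Tendsto g l atTop) (hupper : ∃ C, ∀ᶠ x in l, f x ≤ g x + C)
    (hlower : ∀ c ∈ Ioo (0 : ℝ) 1, ∃ C, ∀ᶠ x in l, c * g x - C ≤ f x) :
    Tendsto (fun x => f x / g x) l (𝓝 1) := by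
  refine tendsto_order.2 ⟨fun a ha => ?_, fun a ha => ?_⟩
  · obtain ⟨c, hac, hc1⟩ := exists_between (max_lt ha one_pos)
    obtain ⟨C, hC⟩ := hlower c ⟨(le_max_right a 0).trans_lt hac, hc1⟩
    have hlim : Tendsto (fun x => c - C / g x) l (𝓝 c) := by
      simpa using tendsto_const_nhds.sub (tendsto_const_nhds.div_atTop hg)
    filter_upwards [hlim.eventually_const_lt ((le_max_left a 0).trans_lt hac), hC,
      hg.eventually_gt_atTop 0] with x hax hfx hgx
    calc a < c - C / g x := hax
      _ = (c * g x - C) / g x := by field_simp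
      _ ≤ f x / g x := div_le_div_of_nonneg_right hfx hgx.le
  · obtain ⟨C, hC⟩ := hupper
    have hlim : Tendsto (fun x => 1 + C / g x) l (𝓝 1) := by
      simpa using tendsto_const_nhds.add (tendsto_const_nhds.div_atTop hg)
    filter_upwards [hlim.eventually_lt_const ha, hC, hg.eventually_gt_atTop 0] with x hax hfx hgx
    calc f x / g x ≤ (g x + C) / g x := div_le_div_of_nonneg_right hfx hgx.le
      _ = 1 + C / g x := by field_simp
      _ < a := hax

/-- Proposition 2.2(1): the Köhlbecker transform
`K(M)(x) = -log(x ∫₀^∞ e^{-(xt+M(t))} dt)` is asymptotically equivalent at `+∞`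
to the Legendre transform `L(M)(x) = inf_{τ>0} (xτ + M(τ))`. -/
theorem stmt_1 (M : ℝ → ℝ)
    (hpos : ∀ t > (0 : ℝ), 0 < M t)
    (hcont : ContinuousOn M (Set.Ioi 0))
    (hanti : AntitoneOn M (Set.Ioi 0))
    (hlim : Tendsto M (nhdsWithin 0 (Set.Ioi 0)) atTop)
    (L K : ℝ → ℝ)
    (hL : ∀ x : ℝ, L x = ⨅ τ : Set.Ioi (0 : ℝ), (x * (τ : ℝ) + M τ))
    (hK : ∀ x : ℝ, K x =
      -Real.log (x * ∫ t in Set.Ioi (0 : ℝ), Real.exp (-(x * t + M t)))) :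
    Tendsto (fun x => K x / L x) atTop (nhds 1) := by
  have hM : ∀ t > 0, 0 ≤ M t := fun t ht => (hpos t ht).le
  have hmeas : AEMeasurable M (volume.restrict (Ioi 0)) := hcont.aemeasurable measurableSet_Ioi
  obtain rfl : L = legendreTransform M := funext hL
  obtain rfl : K = fun x => -log (kohlbeckerIntegral M x) := funext hK
  refine tendsto_div_nhds_one_of_bounds (tendsto_legendreTransform_atTop hM hlim)
    ⟨1, ?_⟩ fun c hc => ⟨-log (1 - c), ?_⟩
  · filter_upwards [eventually_gt_atTop 0] with x hx
    exact neg_log_kohlbeckerIntegral_le hM hmeas hanti hx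
  · filter_upwards [eventually_gt_atTop 0] with x hx
    have := le_neg_log_kohlbeckerIntegral hM hmeas hanti (sub_pos.2 hc.2) (sub_le_self 1 hc.1.le) hx
    linarith
end

section
/- Let M : (0,∞) → (0,∞) be continuous and strictly decreasing with M(t) → +∞ as t → 0⁺. Then the function t ↦ M(t)/t is a continuous strictly decreasing bijection from (0,∞) onto (0,∞); denote its inverse by (M/id)⁻¹. For every t > 0, writing x* := (M/id)⁻¹(t) (the unique x > 0 with M(x) = t·x), one has M(x*) ≤ inf_{τ>0} (tτ + M(τ)) ≤ 2·M(x*). In particular the Legendre transform L(M)(t) := inf_{τ>0}(tτ + M(τ)) satisfies M∘(M/id)⁻¹ ≤ L(M) ≤ 2·M∘(M/id)⁻¹ on (0,∞). -/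
/-!
Since `M` is decreasing and positive, `M t / t` is strictly decreasing; it tends to `+∞` at `0⁺`
and to `0` at `+∞`, so by the intermediate value theorem it maps `(0,∞)` onto itself. At the
crossing point `x*` where `M x* = t x*`, every `τ > 0` has `t τ + M τ ≥ M x*` (the first
term dominates for `τ ≥ x*`, the second for `τ ≤ x*`), while `τ = x*` gives
`t x* + M x* = 2 M x*`.
-/

open Filter Set Topology

noncomputable def legendre (M : ℝ → ℝ) (t : ℝ) : ℝ :=
  ⨅ τ : Ioi (0 : ℝ), (t * (τ : ℝ) + M τ)

section DivSelf

variable {M : ℝ → ℝ}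

theorem continuousOn_div_self (hcont : ContinuousOn M (Ioi 0)) :
    ContinuousOn (fun t => M t / t) (Ioi 0) :=
  hcont.div continuousOn_id fun _ ht => ne_of_gt ht

theorem strictAntiOn_div_self (hpos : ∀ t > (0 : ℝ), 0 < M t) (hanti : AntitoneOn M (Ioi 0)) :
    StrictAntiOn (fun t => M t / t) (Ioi 0) := by
  intro a ha b hb hab
  calc M b / b < M b / a := div_lt_div_of_pos_left (hpos b hb) ha hab
    _ ≤ M a / a := div_le_div_of_nonneg_right (hanti ha hb hab.le) (le_of_lt ha)

theorem tendsto_div_self_nhdsGT_zero (hlim : Tendsto M (𝓝[>] 0) atTop) :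
    Tendsto (fun t => M t / t) (𝓝[>] 0) atTop := by
  simpa only [div_eq_mul_inv] using hlim.atTop_mul_atTop₀ tendsto_inv_nhdsGT_zero

theorem tendsto_div_self_atTop (hnonneg : ∀ t > (0 : ℝ), 0 ≤ M t)
    (hanti : AntitoneOn M (Ioi 0)) :
    Tendsto (fun t => M t / t) atTop (𝓝 0) := by
  have hupper : ∀ᶠ t in atTop, M t / t ≤ M 1 / t := by
    filter_upwards [eventually_ge_atTop 1] with t ht
    have hM : M t ≤ M 1 := hanti (mem_Ioi.mpr one_pos) (mem_Ioi.mpr (one_pos.trans_le ht)) ht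
    exact div_le_div_of_nonneg_right hM (by linarith)
  have hlower : ∀ᶠ t in atTop, 0 ≤ M t / t := by
    filter_upwards [eventually_gt_atTop 0] with t ht
    exact div_nonneg (hnonneg t ht) ht.le
  exact tendsto_of_tendsto_of_tendsto_of_le_of_le' tendsto_const_nhds
    (tendsto_const_nhds.div_atTop tendsto_id) hlower hupper

theorem bijOn_div_self (hpos : ∀ t > (0 : ℝ), 0 < M t) (hcont : ContinuousOn M (Ioi 0))
    (hanti : AntitoneOn M (Ioi 0)) (hlim : Tendsto M (𝓝[>] 0) atTop) :
    BijOn (fun t => M t / t) (Ioi 0) (Ioi 0) := by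
  refine ⟨fun t ht => div_pos (hpos t ht) ht, (strictAntiOn_div_self hpos hanti).injOn, ?_⟩
  exact isPreconnected_Ioi.intermediate_value_Ioi (l₁ := atTop) (l₂ := 𝓝[>] 0)
    (le_principal_iff.mpr (Ioi_mem_atTop 0)) inf_le_right (continuousOn_div_self hcont)
    (tendsto_div_self_atTop (fun t ht => (hpos t ht).le) hanti) (tendsto_div_self_nhdsGT_zero hlim)

end DivSelf

section Legendre

variable {M : ℝ → ℝ} {t : ℝ}

theorem legendre_le (ht : 0 ≤ t) (hnonneg : ∀ τ > (0 : ℝ), 0 ≤ M τ) {τ : ℝ}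
    (hτ : 0 < τ) :
    legendre M t ≤ t * τ + M τ := by
  refine ciInf_le ⟨0, ?_⟩ (⟨τ, hτ⟩ : Ioi (0 : ℝ))
  rintro _ ⟨⟨σ, hσ⟩, rfl⟩
  exact add_nonneg (mul_nonneg ht (le_of_lt hσ)) (hnonneg σ hσ)

theorem le_legendre_of_eq_mul (ht : 0 ≤ t) (hnonneg : ∀ τ > (0 : ℝ), 0 ≤ M τ)
    (hanti : AntitoneOn M (Ioi 0)) {x : ℝ} (hx : 0 < x) (hMx : M x = t * x) :
    M x ≤ legendre M t := by
  refine le_ciInf fun ⟨τ, (hτ : 0 < τ)⟩ => ?_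
  rcases le_total x τ with hxτ | hτx
  · calc M x = t * x := hMx
      _ ≤ t * τ := mul_le_mul_of_nonneg_left hxτ ht
      _ ≤ t * τ + M τ := le_add_of_nonneg_right (hnonneg τ hτ)
  · calc M x ≤ M τ := hanti hτ hx hτx
      _ ≤ t * τ + M τ := le_add_of_nonneg_left (mul_nonneg ht hτ.le)

end Legendre

/-- Proposition 2.2(3) with explicit constants: for `M` continuous, strictly
decreasing on `(0,∞)` with `M(0⁺) = +∞`, the map `t ↦ M(t)/t` is a continuous
strictly decreasing bijection of `(0,∞)` onto itself, and for each `t > 0`, the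
unique `x* > 0` with `M(x*) = t·x*` satisfies
`M(x*) ≤ inf_{τ>0}(tτ + M(τ)) ≤ 2·M(x*)`. -/
theorem stmt_2 (M : ℝ → ℝ)
    (hpos : ∀ t > (0 : ℝ), 0 < M t)
    (hcont : ContinuousOn M (Set.Ioi 0))
    (hanti : StrictAntiOn M (Set.Ioi 0))
    (hlim : Tendsto M (nhdsWithin 0 (Set.Ioi 0)) atTop) :
    (ContinuousOn (fun t => M t / t) (Set.Ioi 0) ∧
      StrictAntiOn (fun t => M t / t) (Set.Ioi 0) ∧
      Set.BijOn (fun t => M t / t) (Set.Ioi 0) (Set.Ioi 0)) ∧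
    ∀ t > (0 : ℝ), ∃ x : ℝ, 0 < x ∧ M x = t * x ∧
      (∀ y : ℝ, 0 < y → M y = t * y → y = x) ∧
      M x ≤ (⨅ τ : Set.Ioi (0 : ℝ), (t * (τ : ℝ) + M τ)) ∧
      (⨅ τ : Set.Ioi (0 : ℝ), (t * (τ : ℝ) + M τ)) ≤ 2 * M x := by
  have hbij := bijOn_div_self hpos hcont hanti.antitoneOn hlim
  have hnonneg : ∀ τ > (0 : ℝ), 0 ≤ M τ := fun τ hτ => (hpos τ hτ).le
  refine ⟨⟨continuousOn_div_self hcont, strictAntiOn_div_self hpos hanti.antitoneOn, hbij⟩,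
    fun t ht => ?_⟩
  have hfixed : ∀ y > (0 : ℝ), M y = t * y ↔ M y / y = t := fun y hy =>
    (div_eq_iff hy.ne').symm
  obtain ⟨x, hx, hfx⟩ := hbij.surjOn (mem_Ioi.mpr ht)
  have hMx : M x = t * x := (hfixed x hx).mpr hfx
  refine ⟨x, hx, hMx, fun y hy hMy => hbij.injOn hy hx ?_,
    le_legendre_of_eq_mul ht.le hnonneg hanti.antitoneOn hx hMx, ?_⟩
  · exact ((hfixed y hy).mp hMy).trans hfx.symm
  · calc legendre M t ≤ t * x + M x := legendre_le ht.le hnonneg hx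
      _ = 2 * M x := by rw [hMx]; ring
end

section
/- Let G be a countably infinite group and let F : [0,∞) → [0,∞) be nondecreasing with F(t)/t → 0 as t → ∞. Then there exists a function M : G → (0,∞) with Σ_{x∈G} M(x) = 1 and M(x⁻¹) = M(x) for all x ∈ G (a symmetric strictly positive probability density) such that for every C > 0 there is n₀ with sup_{x∈G} M^{*n}(x) ≤ exp(−C·F(n)) for all n ≥ n₀; i.e. −log( sup_{x∈G} M^{*n}(x) ) / F(n) → +∞ as n → ∞ whenever F is eventually positive. -/
open Filter
open scoped BigOperators Classical

/-- Convolution of two real-valued functions on a group: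
`(f * g)(x) = ∑_y f(y) g(y⁻¹ x)`. -/
noncomputable def gconv {G : Type*} [Group G] (f g : G → ℝ) : G → ℝ :=
  fun x => ∑' y : G, f y * g (y⁻¹ * x)

/-- `n`-fold convolution power, with `f^{*0} = δ_e` and `f^{*(n+1)} = f * f^{*n}`
(so `f^{*1} = f`). -/
noncomputable def gconvPow {G : Type*} [Group G] (f : G → ℝ) : ℕ → G → ℝ
  | 0 => fun x => if x = 1 then 1 else 0
  | n + 1 => gconv f (gconvPow f n)

/-!
Take `M = ∑ₖ 2^{-(k+1)} μₖ`, where `μₖ` is the symmetrised uniform measure on the first `Nₖ`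
elements of an enumeration of `G`. Splitting `M = a + b` into the first `k` components (mass
`1 - 2^{-k}`) and the rest (sup at most `2^{-k}/Nₖ`) gives, by induction on `n`,
`sup M^{*n} ≤ (1 - 2^{-k})^n + 1/Nₖ ≤ exp(-n 2^{-k}) + 1/Nₖ` for every `k`.
Since `F(n) = o(n)`, the first term beats `exp(-k F(n))` once `n` passes a threshold `Tₖ`;
choosing `Nₖ ≥ 2 exp(k F(T_{k+1}))` makes the second one do so on the window
`Tₖ < n ≤ T_{k+1}`, and `k → ∞` along the windows.
-/
section Convolution

variable {G : Type*} [Group G] {f f₁ f₂ g : G → ℝ}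

theorem hasSum_gconv_prod (hf : Summable f) (hg : Summable g) :
    HasSum (fun p : G × G => f p.2 * g (p.2⁻¹ * p.1)) ((∑' x, f x) * ∑' x, g x) := by
  have hprod : HasSum (fun p : G × G => f p.1 * g p.2) ((∑' x, f x) * ∑' x, g x) := by
    have hf' := summable_norm_iff.mpr hf
    have hg' := summable_norm_iff.mpr hg
    rw [tsum_mul_tsum_of_summable_norm hf' hg']
    exact (summable_mul_of_summable_norm hf' hg').hasSum
  -- `(x, y) ↦ (y, y⁻¹ x)` is a bijection of `G × G`
  exact ((Equiv.prodComm G G).trans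
    (Equiv.prodShear (Equiv.refl G) fun y => Equiv.mulLeft y⁻¹)).hasSum_iff.mpr hprod

theorem summable_gconv_summand (hf : Summable f) (hg : Summable g) (x : G) :
    Summable fun y => f y * g (y⁻¹ * x) :=
  (hasSum_gconv_prod hf hg).summable.prod_factor x

theorem hasSum_gconv (hf : Summable f) (hg : Summable g) :
    HasSum (gconv f g) ((∑' x, f x) * ∑' x, g x) :=
  (hasSum_gconv_prod hf hg).prod_fiberwise fun x => (summable_gconv_summand hf hg x).hasSum

theorem gconv_add_left (hf₁ : Summable f₁) (hf₂ : Summable f₂) (hg : Summable g) :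
    gconv (f₁ + f₂) g = gconv f₁ g + gconv f₂ g := by
  funext x
  simp only [gconv, Pi.add_apply, add_mul]
  exact (summable_gconv_summand hf₁ hg x).tsum_add (summable_gconv_summand hf₂ hg x)

theorem gconv_le_tsum_mul {c : ℝ} (hf0 : 0 ≤ f) (hf : Summable f) (hg : Summable g)
    (hgc : ∀ x, g x ≤ c) (x : G) : gconv f g x ≤ (∑' y, f y) * c := by
  rw [← tsum_mul_right]
  exact (summable_gconv_summand hf hg x).tsum_le_tsum
    (fun y => mul_le_mul_of_nonneg_left (hgc _) (hf0 y)) (hf.mul_right c)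

theorem gconv_le_mul_tsum {c : ℝ} (hg0 : 0 ≤ g) (hf : Summable f) (hg : Summable g)
    (hfc : ∀ y, f y ≤ c) (x : G) : gconv f g x ≤ c * ∑' y, g y := by
  let e : G ≃ G := (Equiv.inv G).trans (Equiv.mulRight x)
  rw [← e.tsum_eq, ← tsum_mul_left]
  exact (summable_gconv_summand hf hg x).tsum_le_tsum
    (fun y => mul_le_mul_of_nonneg_right (hfc y) (hg0 _)) ((e.summable_iff.mpr hg).mul_left c)

theorem hasSum_gconvPow {M : G → ℝ} (hM : Summable M) :
    ∀ n, HasSum (gconvPow M n) ((∑' x, M x) ^ n)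
  | 0 => hasSum_ite_eq 1 1
  | n + 1 => by
    rw [pow_succ', ← (hasSum_gconvPow hM n).tsum_eq]
    exact hasSum_gconv hM (hasSum_gconvPow hM n).summable

theorem gconvPow_nonneg {M : G → ℝ} (hM0 : 0 ≤ M) : ∀ n, 0 ≤ gconvPow M n
  | 0 => fun x => by simp only [gconvPow]; split_ifs <;> norm_num
  | n + 1 => fun _ => tsum_nonneg fun y => mul_nonneg (hM0 y) (gconvPow_nonneg hM0 n _)

/-- The part `a` of small mass is absorbed by the sup of `M^{*n}`, the part `b` of small sup by
the mass of `M^{*n}`: `sup M^{*(n+1)} ≤ A sup M^{*n} + (1 - A) D`. -/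
theorem gconvPow_add_le {a b : G → ℝ} (ha0 : 0 ≤ a) (hb0 : 0 ≤ b) (ha : Summable a)
    (hb : Summable b) (hmass : ∑' x, (a + b) x ≤ 1) {A D : ℝ} (hA : ∑' x, a x ≤ A)
    (hD : 0 ≤ D) (hbD : ∀ x, b x ≤ (1 - A) * D) (n : ℕ) (x : G) :
    gconvPow (a + b) n x ≤ A ^ n + D := by
  induction n generalizing x with
  | zero =>
    simp only [gconvPow, pow_zero]
    split_ifs <;> linarith
  | succ n ih =>
    set P := gconvPow (a + b) n
    have hP : HasSum P ((∑' y, (a + b) y) ^ n) := hasSum_gconvPow (ha.add hb) n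
    have hPmass : ∑' y, P y ≤ 1 := by
      rw [hP.tsum_eq]
      exact pow_le_one₀ (tsum_nonneg fun y => add_nonneg (ha0 y) (hb0 y)) hmass
    have hA0 : 0 ≤ A := (tsum_nonneg ha0).trans hA
    have hbD0 : 0 ≤ (1 - A) * D := (hb0 x).trans (hbD x)
    calc gconvPow (a + b) (n + 1) x = gconv a P x + gconv b P x := by
          rw [gconvPow, gconv_add_left ha hb hP.summable, Pi.add_apply]
      _ ≤ (∑' y, a y) * (A ^ n + D) + (1 - A) * D * ∑' y, P y :=
          add_le_add (gconv_le_tsum_mul ha0 ha hP.summable ih x)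
            (gconv_le_mul_tsum (gconvPow_nonneg (add_nonneg ha0 hb0) n) hb hP.summable hbD x)
      _ ≤ A * (A ^ n + D) + (1 - A) * D * 1 := by gcongr
      _ = A ^ (n + 1) + D := by ring

end Convolution

section Mixture

variable {α : Type*}

noncomputable def mixture (w : ℕ → ℝ) (μ : ℕ → α → ℝ) (x : α) : ℝ :=
  ∑' k, w k * μ k x

variable {w : ℕ → ℝ} {μ : ℕ → α → ℝ}

theorem summable_mixture_prod (hw0 : 0 ≤ w) (hw : Summable w) (hμ0 : ∀ k, 0 ≤ μ k)
    (hμ : ∀ k, HasSum (μ k) 1) : Summable fun p : α × ℕ => w p.2 * μ p.2 p.1 := by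
  have h : Summable fun p : ℕ × α => w p.1 * μ p.1 p.2 := by
    refine (summable_prod_of_nonneg fun p => mul_nonneg (hw0 _) (hμ0 _ _)).mpr
      ⟨fun k => (hμ k).summable.mul_left (w k), ?_⟩
    simpa only [tsum_mul_left, (hμ _).tsum_eq, mul_one] using hw
  exact (Equiv.prodComm α ℕ).summable_iff.mpr h

theorem hasSum_mixture (hw0 : 0 ≤ w) (hw : HasSum w 1) (hμ0 : ∀ k, 0 ≤ μ k)
    (hμ : ∀ k, HasSum (μ k) 1) : HasSum (mixture w μ) 1 := by
  have h := summable_mixture_prod hw0 hw.summable hμ0 hμ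
  have hmass : ∑' x, mixture w μ x = 1 := by
    rw [show ∑' x, mixture w μ x = ∑' x, ∑' k, w k * μ k x from rfl,
      (Summable.tsum_comm (f := fun x k => w k * μ k x) h).symm, ← hw.tsum_eq]
    simp only [tsum_mul_left, (hμ _).tsum_eq, mul_one]
  exact hmass ▸ h.prod.hasSum

theorem mixture_pos (hw0 : 0 ≤ w) (hw : Summable w) (hμ0 : ∀ k, 0 ≤ μ k)
    (hμ : ∀ k, HasSum (μ k) 1) {x : α} {k : ℕ} (hwk : 0 < w k) (hμk : 0 < μ k x) :
    0 < mixture w μ x :=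
  ((summable_mixture_prod hw0 hw hμ0 hμ).prod_factor x).tsum_pos
    (fun j => mul_nonneg (hw0 j) (hμ0 j x)) k (mul_pos hwk hμk)

theorem mixture_inv {G : Type*} [Inv G] {μ : ℕ → G → ℝ} (hμ : ∀ k x, μ k x⁻¹ = μ k x)
    (x : G) : mixture w μ x⁻¹ = mixture w μ x := by
  simp only [mixture, hμ]

theorem gconvPow_mixture_le {G : Type*} [Group G] {μ : ℕ → G → ℝ} (hw0 : 0 ≤ w)
    (hw : HasSum w 1) (hμ0 : ∀ k, 0 ≤ μ k) (hμ : ∀ k, HasSum (μ k) 1) (k : ℕ) {c : ℝ}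
    (hc : ∀ j, k ≤ j → ∀ x, μ j x ≤ c) (n : ℕ) (x : G) :
    gconvPow (mixture w μ) n x ≤ (∑ j ∈ Finset.range k, w j) ^ n + c := by
  have hsum := summable_mixture_prod hw0 hw.summable hμ0 hμ
  set a : G → ℝ := fun x => ∑ j ∈ Finset.range k, w j * μ j x
  set b : G → ℝ := fun x => ∑' j, w (j + k) * μ (j + k) x
  have hab : mixture w μ = a + b :=
    funext fun x => ((hsum.prod_factor x).sum_add_tsum_nat_add k).symm
  have ha : HasSum a (∑ j ∈ Finset.range k, w j) := by
    simpa only [mul_one] using hasSum_sum fun j _ => (hμ j).mul_left (w j)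
  have hb : Summable b := by
    refine ((hasSum_mixture hw0 hw hμ0 hμ).summable.sub ha.summable).congr fun x => ?_
    simp only [hab, Pi.add_apply, add_sub_cancel_left]
  have htail : ∑' j, w (j + k) = 1 - ∑ j ∈ Finset.range k, w j := by
    rw [← hw.tsum_eq, ← hw.summable.sum_add_tsum_nat_add k, add_sub_cancel_left]
  have hbc : ∀ x, b x ≤ (1 - ∑ j ∈ Finset.range k, w j) * c := fun x => by
    rw [← htail, ← tsum_mul_right]
    exact ((summable_nat_add_iff k).mpr (hsum.prod_factor x)).tsum_le_tsum
      (fun j => mul_le_mul_of_nonneg_left (hc _ (Nat.le_add_left k j) x) (hw0 _))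
      (((summable_nat_add_iff k).mpr hw.summable).mul_right c)
  rw [hab]
  refine gconvPow_add_le (fun x => Finset.sum_nonneg fun j _ => mul_nonneg (hw0 j) (hμ0 j x))
    (fun x => tsum_nonneg fun j => mul_nonneg (hw0 _) (hμ0 _ x)) ha.summable hb ?_
    ha.tsum_eq.le ((hμ0 k x).trans (hc k le_rfl x)) hbc n x
  rw [← hab, (hasSum_mixture hw0 hw hμ0 hμ).tsum_eq]

end Mixture

section SymmUniform

variable {G : Type*} [Group G]

noncomputable def symmUniform (s : Finset G) (x : G) : ℝ :=
  ((if x ∈ s then 1 else 0) + (if x⁻¹ ∈ s then 1 else 0)) / (2 * s.card)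

variable (s : Finset G)

theorem symmUniform_nonneg : 0 ≤ symmUniform s := fun x => by
  unfold symmUniform
  split_ifs <;> positivity

theorem symmUniform_inv (x : G) : symmUniform s x⁻¹ = symmUniform s x := by
  simp only [symmUniform, inv_inv, add_comm]

theorem symmUniform_le (x : G) : symmUniform s x ≤ (s.card : ℝ)⁻¹ := by
  calc symmUniform s x ≤ 2 / (2 * s.card) := by
        unfold symmUniform
        gcongr
        split_ifs <;> norm_num
    _ = (s.card : ℝ)⁻¹ := by rw [div_mul_eq_div_div, div_self two_ne_zero, one_div]

theorem symmUniform_pos {x : G} (hx : x ∈ s) : 0 < symmUniform s x := by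
  have : 0 < s.card := Finset.card_pos.mpr ⟨x, hx⟩
  unfold symmUniform
  split_ifs <;> positivity

theorem hasSum_symmUniform (hs : s.Nonempty) : HasSum (symmUniform s) 1 := by
  have h : HasSum (fun x => if x ∈ s then (1 : ℝ) else 0) s.card := by
    have : HasSum (fun x => if x ∈ s then (1 : ℝ) else 0)
        (∑ x ∈ s, if x ∈ s then 1 else 0) := hasSum_sum_of_ne_finset_zero fun x hx => if_neg hx
    rwa [Finset.sum_ite_mem, Finset.inter_self, Finset.sum_const, nsmul_one] at this
  have hinv : HasSum (fun x => if x⁻¹ ∈ s then (1 : ℝ) else 0) s.card :=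
    (Equiv.inv G).hasSum_iff (f := fun x => if x ∈ s then (1 : ℝ) else 0) |>.mpr h
  have hcard : (s.card : ℝ) ≠ 0 := by exact_mod_cast hs.card_pos.ne'
  have := (h.add hinv).div_const (2 * s.card)
  rwa [show ((s.card : ℝ) + s.card) / (2 * s.card) = 1 by field_simp; ring] at this

end SymmUniform

section DyadicMixture

variable {G : Type*} [Group G]

noncomputable def dyadicMixture (S : ℕ → Finset G) : G → ℝ :=
  mixture (fun k => 2⁻¹ ^ (k + 1)) fun k => symmUniform (S k)

theorem hasSum_two_inv_pow_succ : HasSum (fun k => (2 : ℝ)⁻¹ ^ (k + 1)) 1 := by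
  have h := (hasSum_geometric_of_lt_one (r := (2 : ℝ)⁻¹) (by norm_num) (by norm_num)).mul_left
    2⁻¹
  rw [show (2 : ℝ)⁻¹ * (1 - 2⁻¹)⁻¹ = 1 by norm_num] at h
  simpa only [← pow_succ'] using h

theorem sum_range_two_inv_pow_succ (k : ℕ) :
    ∑ j ∈ Finset.range k, (2 : ℝ)⁻¹ ^ (j + 1) = 1 - 2⁻¹ ^ k := by
  induction k with
  | zero => simp
  | succ k ih => rw [Finset.sum_range_succ, ih]; ring

variable {S : ℕ → Finset G}

theorem hasSum_dyadicMixture (hS : ∀ k, (S k).Nonempty) : HasSum (dyadicMixture S) 1 :=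
  hasSum_mixture (fun k => by positivity) hasSum_two_inv_pow_succ
    (fun k => symmUniform_nonneg (S k)) fun k => hasSum_symmUniform (S k) (hS k)

theorem dyadicMixture_pos (hS : ∀ k, (S k).Nonempty) {x : G} {k : ℕ} (hx : x ∈ S k) :
    0 < dyadicMixture S x :=
  mixture_pos (fun k => by positivity) hasSum_two_inv_pow_succ.summable
    (fun k => symmUniform_nonneg (S k)) (fun k => hasSum_symmUniform (S k) (hS k))
    (by positivity) (symmUniform_pos (S k) hx)

theorem dyadicMixture_inv (x : G) : dyadicMixture S x⁻¹ = dyadicMixture S x :=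
  mixture_inv (fun k => symmUniform_inv (S k)) x

theorem gconvPow_dyadicMixture_le (hS : ∀ k, (S k).Nonempty)
    (hmono : Monotone fun k => (S k).card) (k n : ℕ) (x : G) :
    gconvPow (dyadicMixture S) n x ≤ (1 - 2⁻¹ ^ k) ^ n + ((S k).card : ℝ)⁻¹ := by
  rw [← sum_range_two_inv_pow_succ]
  refine gconvPow_mixture_le (fun k => by positivity) hasSum_two_inv_pow_succ
    (fun k => symmUniform_nonneg (S k)) (fun k => hasSum_symmUniform (S k) (hS k)) k
    (fun j hj y => (symmUniform_le (S j) y).trans ?_) n x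
  exact inv_anti₀ (Nat.cast_pos.mpr (hS k).card_pos) (Nat.cast_le.mpr (hmono hj))

end DyadicMixture

theorem eventually_mul_add_le_mul_of_tendsto_div {F : ℝ → ℝ}
    (hFsub : Tendsto (fun t => F t / t) atTop (nhds 0)) (a b : ℝ) {ε : ℝ} (hε : 0 < ε) :
    ∀ᶠ n : ℕ in atTop, a * F n + b ≤ n * ε := by
  have hlim : Tendsto (fun t => a * (F t / t) + b / t) atTop (nhds 0) := by
    simpa using (hFsub.const_mul a).add (tendsto_const_nhds.div_atTop tendsto_id)
  filter_upwards [(hlim.comp tendsto_natCast_atTop_atTop).eventually (gt_mem_nhds hε),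
    eventually_gt_atTop 0] with n hn hn0
  rw [Function.comp_apply, mul_div_assoc', ← add_div, div_lt_iff₀ (Nat.cast_pos.mpr hn0)]
    at hn
  linarith

theorem one_sub_pow_add_inv_le_exp_neg {t x y : ℝ} {n : ℕ} (ht : t ≤ 1)
    (hn : x + Real.log 2 ≤ n * t) (hy : 2 * Real.exp x ≤ y) :
    (1 - t) ^ n + y⁻¹ ≤ Real.exp (-x) := by
  have hpow : (1 - t) ^ n ≤ Real.exp (-x) / 2 :=
    calc (1 - t) ^ n ≤ Real.exp (-t) ^ n :=
          pow_le_pow_left₀ (by linarith) (Real.one_sub_le_exp_neg t) n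
      _ = Real.exp (-(n * t)) := by rw [← Real.exp_nat_mul, mul_neg]
      _ ≤ Real.exp (-x - Real.log 2) := Real.exp_le_exp.mpr (by linarith)
      _ = Real.exp (-x) / 2 := by rw [Real.exp_sub, Real.exp_log two_pos]
  have hinv : y⁻¹ ≤ Real.exp (-x) / 2 :=
    calc y⁻¹ ≤ (2 * Real.exp x)⁻¹ := inv_anti₀ (by positivity) hy
      _ = Real.exp (-x) / 2 := by rw [Real.exp_neg]; ring
  linarith

theorem StrictMono.exists_window {T : ℕ → ℕ} (hT : StrictMono T) {K n : ℕ} (hn : T K < n) :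
    ∃ k, K ≤ k ∧ T k < n ∧ n ≤ T (k + 1) := by
  obtain ⟨k, hkn, hnk⟩ := hT.exists_between_of_tendsto_atTop hT.tendsto_atTop
    ((hT.monotone (Nat.zero_le K)).trans_lt hn)
  refine ⟨k, ?_, hkn, hnk⟩
  by_contra h
  have := hT.monotone (show k + 1 ≤ K by omega)
  omega

theorem exists_scales {F : ℝ → ℝ} (hF0 : ∀ t ≥ (0 : ℝ), 0 ≤ F t)
    (hFmono : MonotoneOn F (Set.Ici 0)) (hFsub : Tendsto (fun t => F t / t) atTop (nhds 0)) :
    ∃ N : ℕ → ℕ, Monotone N ∧ (∀ k, k < N k) ∧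
      ∀ C > (0 : ℝ), ∃ n₀ : ℕ, ∀ n ≥ n₀, ∃ k,
        (1 - (2 : ℝ)⁻¹ ^ k) ^ n + (N k : ℝ)⁻¹ ≤ Real.exp (-C * F n) := by
  obtain ⟨T, hTmono, hT⟩ : ∃ T : ℕ → ℕ, StrictMono T ∧
      ∀ k n, T k ≤ n → (k : ℝ) * F n + Real.log 2 ≤ n * 2⁻¹ ^ k :=
    extraction_forall_of_eventually fun k => eventually_forall_ge_atTop.mpr
      (eventually_mul_add_le_mul_of_tendsto_div hFsub k (Real.log 2) (by positivity))
  have hFnat : ∀ m : ℕ, 0 ≤ F m := fun m => hF0 m (Nat.cast_nonneg m)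
  have hFmono_nat : ∀ {m m' : ℕ}, m ≤ m' → F m ≤ F m' := fun h =>
    hFmono (Set.mem_Ici.mpr (Nat.cast_nonneg _)) (Set.mem_Ici.mpr (Nat.cast_nonneg _))
      (Nat.cast_le.mpr h)
  -- `Nₖ` controls `exp (k F n)` on the whole window `Tₖ < n ≤ T_{k+1}`
  let N : ℕ → ℕ := fun k => ⌈2 * Real.exp (k * F (T (k + 1)))⌉₊ + k + 1
  refine ⟨N, monotone_nat_of_le_succ fun k => ?_, fun k => by simp only [N]; omega,
    fun C hC => ⟨T ⌈C⌉₊ + 1, fun n hn => ?_⟩⟩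
  · have hexp : 2 * Real.exp (k * F (T (k + 1)))
        ≤ 2 * Real.exp ((k + 1 : ℕ) * F (T (k + 1 + 1))) := by
      gcongr
      · exact hFnat _
      · exact_mod_cast Nat.le_succ k
      · exact hFmono_nat (hTmono.monotone (Nat.le_succ _))
    have := Nat.ceil_mono hexp
    simp only [N]
    omega
  obtain ⟨k, hCk, hkn, hnk⟩ := hTmono.exists_window (show T ⌈C⌉₊ < n by omega)
  have hN : 2 * Real.exp (k * F n) ≤ N k :=
    calc 2 * Real.exp (k * F n) ≤ 2 * Real.exp (k * F (T (k + 1))) := by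
          gcongr; exact hFmono_nat hnk
      _ ≤ ⌈2 * Real.exp (k * F (T (k + 1)))⌉₊ := Nat.le_ceil _
      _ ≤ N k := by exact_mod_cast Nat.le_add_right _ _ |>.trans (Nat.le_succ _)
  refine ⟨k, (one_sub_pow_add_inv_le_exp_neg (pow_le_one₀ (by norm_num) (by norm_num))
    (hT k n hkn.le) hN).trans (Real.exp_le_exp.mpr ?_)⟩
  rw [neg_mul, neg_le_neg_iff]
  exact mul_le_mul_of_nonneg_right ((Nat.le_ceil C).trans (Nat.cast_le.mpr hCk)) (hFnat n)

/-- Theorem 2.4 (countable discrete case): on any countably infinite group,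
for any nondecreasing `F : [0,∞) → [0,∞)` with `F(t) = o(t)`, there is a
symmetric strictly positive probability density `M` whose convolution powers
satisfy `sup_x M^{*n}(x) ≤ exp(-C·F(n))` eventually, for every `C > 0`. -/
theorem stmt_3 {G : Type*} [Group G] [Countable G] [Infinite G]
    (F : ℝ → ℝ) (hF0 : ∀ t ≥ (0 : ℝ), 0 ≤ F t)
    (hFmono : MonotoneOn F (Set.Ici 0))
    (hFsub : Tendsto (fun t => F t / t) atTop (nhds 0)) :
    ∃ M : G → ℝ, (∀ x : G, 0 < M x) ∧ (∑' x : G, M x = 1) ∧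
      (∀ x : G, M x⁻¹ = M x) ∧
      ∀ C > (0 : ℝ), ∃ n₀ : ℕ, ∀ n : ℕ, n₀ ≤ n → ∀ x : G,
        gconvPow M n x ≤ Real.exp (-C * F n) := by
  obtain ⟨N, hNmono, hN, hdecay⟩ := exists_scales hF0 hFmono hFsub
  obtain ⟨e⟩ := nonempty_equiv_of_countable (α := ℕ) (β := G)
  let S : ℕ → Finset G := fun k => (Finset.range (N k)).map e.toEmbedding
  have hS : ∀ k, (S k).card = N k := fun k => by simp [S]
  have hSne : ∀ k, (S k).Nonempty := fun k =>
    Finset.card_pos.mp (by rw [hS]; exact (Nat.zero_le k).trans_lt (hN k))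
  refine ⟨dyadicMixture S, fun x => dyadicMixture_pos hSne (k := e.symm x) ?_,
    (hasSum_dyadicMixture hSne).tsum_eq, dyadicMixture_inv, fun C hC => ?_⟩
  · simpa [S] using hN (e.symm x)
  obtain ⟨n₀, hn₀⟩ := hdecay C hC
  refine ⟨n₀, fun n hn x => ?_⟩
  obtain ⟨k, hk⟩ := hn₀ n hn
  have hmono : Monotone fun k => (S k).card := by simpa only [hS] using hNmono
  calc gconvPow (dyadicMixture S) n x ≤ (1 - 2⁻¹ ^ k) ^ n + ((S k).card : ℝ)⁻¹ :=
        gconvPow_dyadicMixture_le hSne hmono k n x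
    _ ≤ Real.exp (-C * F n) := by rwa [hS]
end

section
/- The random walk with law μ is recurrent if and only if Σ_{n≥0} 1/( |G_n| · (1 − μ(G_n)) ) = ∞; that is, Σ_{n≥1} μ^{*n}(e) = ∞ if and only if Σ_{n≥0} 1/( |G_n| · (1 − Σ_{x∈G_n} μ(x)) ) = ∞. (Note that 1 − μ(G_n) = Σ_{i>n} c_i (1 − |G_n|/|G_i|) > 0 for every n.) -/
open scoped BigOperators Classical

/-
Since `m_j * m_k = m_{max j k}`, every convolution power of `μ = ∑ c_k m_k` is again a mixture of
the `m_l`: `μ^{*n} = ∑_l (P_{l+1}^n - P_l^n) m_l`, where `P_l = c_0 + ⋯ + c_{l-1}`; the weight of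
`m_l` is the probability that the largest of `n` independent `c`-distributed indices is `l`.
Summing the geometric series in `n` gives
  `∑_{n ≥ 1} μ^{*n}(e) = ∑_l ((1 - P_{l+1})⁻¹ - (1 - P_l)⁻¹) / |G_l|`,
and since `|G_{l+1}| ≥ 2 |G_l|`, Abel summation shows that this is finite iff
`∑_l 1 / (|G_l| (1 - P_{l+1}))` is. Finally `1 - μ(G_n) = ∑_{k > n} c_k (1 - |G_n| / |G_k|)` lies
between `(1 - P_{n+1}) / 2` and `1 - P_{n+1}`. All series are summed in `ℝ≥0∞`, where they can
be rearranged freely.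
-/

open scoped ENNReal
open Finset

namespace ENNReal

/-- Split `ℕ × ℕ` into the shells `{(j, k) | max j k = l}`. -/
theorem tsum_tsum_eq_tsum_sum_range_add_sum_range (F : ℕ → ℕ → ℝ≥0∞) :
    ∑' j, ∑' k, F j k =
      ∑' l, (∑ i ∈ range l, F l i + ∑ i ∈ range (l + 1), F i l) := by
  have hsplit : ∀ j k, F j k = (if k < j then F j k else 0) + if j ≤ k then F j k else 0 := by
    intro j k
    split_ifs <;> first | omega | simp
  have hrange : ∀ (l : ℕ) (f : ℕ → ℝ≥0∞) (p : ℕ → Prop) [DecidablePred p],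
      (∀ i, p i ↔ i < l) → ∑' i, (if p i then f i else 0) = ∑ i ∈ range l, f i := by
    intro l f p _ hp
    rw [tsum_eq_sum (s := range l) fun i hi => if_neg (by simpa [hp] using hi)]
    exact sum_congr rfl fun i hi => if_pos ((hp i).2 (mem_range.1 hi))
  calc ∑' j, ∑' k, F j k
      = ∑' j, ∑' k, (if k < j then F j k else 0) +
          ∑' k, ∑' j, if j ≤ k then F j k else 0 := by
        rw [ENNReal.tsum_comm (f := fun k j => if j ≤ k then F j k else 0), ← ENNReal.tsum_add]
        exact tsum_congr fun j => by rw [← ENNReal.tsum_add]; exact tsum_congr (hsplit j)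
    _ = ∑' l, (∑ i ∈ range l, F l i + ∑ i ∈ range (l + 1), F i l) := by
        rw [← ENNReal.tsum_add]
        exact tsum_congr fun l => by
          rw [hrange l _ _ fun i => Iff.rfl, hrange (l + 1) _ _ fun i => Nat.lt_succ_iff.symm]

theorem tsum_pow_succ_sub_pow_succ {p q : ℝ≥0∞} (hpq : p ≤ q) (hp : p < 1) :
    ∑' n : ℕ, (q ^ (n + 1) - p ^ (n + 1)) = (1 - q)⁻¹ - (1 - p)⁻¹ := by
  rw [← ENNReal.tsum_geometric, ← ENNReal.tsum_geometric,
    ← ENNReal.tsum_sub _ fun n => by gcongr,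
    tsum_eq_zero_add' (f := fun n => q ^ n - p ^ n) ENNReal.summable]
  · simp
  · rw [ENNReal.tsum_geometric]
    exact ENNReal.inv_ne_top.2 (tsub_pos_of_lt hp).ne'

theorem tsum_mul_le_of_two_mul_le {u a : ℕ → ℝ≥0∞} (hu : Monotone u)
    (ha : ∀ l, 2 * a (l + 1) ≤ a l) :
    ∑' l, u (l + 1) * a l ≤ 2 * ∑' l, (u (l + 1) - u l) * a l + 2 * (u 0 * a 0) := by
  have key : ∀ K, ∑ l ∈ range K, u (l + 1) * a l + 2 * (u K * a K) ≤
      2 * ∑ l ∈ range K, (u (l + 1) - u l) * a l + 2 * (u 0 * a 0) := by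
    intro K
    induction K with
    | zero => simp
    | succ K ih =>
      have hsplit :
          2 * (u K * a K) + 2 * ((u (K + 1) - u K) * a K) = 2 * (u (K + 1) * a K) := by
        rw [← mul_add, ← add_mul, add_tsub_cancel_of_le (hu K.le_succ)]
      calc ∑ l ∈ range (K + 1), u (l + 1) * a l + 2 * (u (K + 1) * a (K + 1))
          = ∑ l ∈ range K, u (l + 1) * a l + u (K + 1) * a K + u (K + 1) * (2 * a (K + 1)) := by
            rw [sum_range_succ]; ring
        _ ≤ ∑ l ∈ range K, u (l + 1) * a l + u (K + 1) * a K + u (K + 1) * a K := by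
            gcongr; exact ha K
        _ = ∑ l ∈ range K, u (l + 1) * a l + 2 * (u K * a K)
              + 2 * ((u (K + 1) - u K) * a K) := by
            rw [add_assoc, ← two_mul, add_assoc, hsplit]
        _ ≤ 2 * ∑ l ∈ range K, (u (l + 1) - u l) * a l + 2 * (u 0 * a 0)
              + 2 * ((u (K + 1) - u K) * a K) := by gcongr
        _ = 2 * ∑ l ∈ range (K + 1), (u (l + 1) - u l) * a l + 2 * (u 0 * a 0) := by
            rw [sum_range_succ]; ring
  refine ENNReal.tsum_le_of_sum_range_le fun K => ?_
  calc ∑ l ∈ range K, u (l + 1) * a l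
        ≤ ∑ l ∈ range K, u (l + 1) * a l + 2 * (u K * a K) := le_self_add
    _ ≤ 2 * ∑ l ∈ range K, (u (l + 1) - u l) * a l + 2 * (u 0 * a 0) := key K
    _ ≤ 2 * ∑' l, (u (l + 1) - u l) * a l + 2 * (u 0 * a 0) := by
        gcongr; exact ENNReal.sum_le_tsum _

theorem tsum_sub_mul_ne_top_iff {u a : ℕ → ℝ≥0∞} (hu : Monotone u)
    (ha : ∀ l, 2 * a (l + 1) ≤ a l) (h0 : u 0 * a 0 ≠ ∞) :
    ∑' l, (u (l + 1) - u l) * a l ≠ ∞ ↔ ∑' l, u (l + 1) * a l ≠ ∞ := by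
  refine ⟨fun h => ne_top_of_le_ne_top ?_ (ENNReal.tsum_mul_le_of_two_mul_le hu ha),
    fun h => ne_top_of_le_ne_top h (ENNReal.tsum_le_tsum fun l => by gcongr; exact tsub_le_self)⟩
  exact ENNReal.add_ne_top.2 ⟨ENNReal.mul_ne_top (by simp) h, ENNReal.mul_ne_top (by simp) h0⟩

theorem tsum_inv_ne_top_iff_of_le {x y : ℕ → ℝ≥0∞} (hyx : ∀ n, y n / 2 ≤ x n)
    (hxy : ∀ n, x n ≤ y n) : ∑' n, (x n)⁻¹ ≠ ∞ ↔ ∑' n, (y n)⁻¹ ≠ ∞ := by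
  refine ⟨fun h => ne_top_of_le_ne_top h (ENNReal.tsum_le_tsum fun n => by gcongr; exact hxy n),
    fun h => ne_top_of_le_ne_top (ENNReal.mul_ne_top (a := 2) (by simp) h) ?_⟩
  rw [← ENNReal.tsum_mul_left]
  refine ENNReal.tsum_le_tsum fun n => ?_
  calc (x n)⁻¹ ≤ (y n / 2)⁻¹ := by gcongr; exact hyx n
    _ = 2 * (y n)⁻¹ := by rw [ENNReal.inv_div (by simp) (by simp), div_eq_mul_inv]

theorem sum_range_lt_tsum {w : ℕ → ℝ≥0∞} (hw : ∑' k, w k ≠ ∞)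
    (hw0 : ∀ k, w k ≠ 0) (l : ℕ) : ∑ i ∈ range l, w i < ∑' k, w k :=
  calc ∑ i ∈ range l, w i < ∑ i ∈ range l, w i + w l :=
        ENNReal.lt_add_right (ne_top_of_le_ne_top hw (ENNReal.sum_le_tsum _)) (hw0 l)
    _ = ∑ i ∈ range (l + 1), w i := (sum_range_succ w l).symm
    _ ≤ ∑' k, w k := ENNReal.sum_le_tsum _

theorem one_sub_tsum_mul_le {w ν : ℕ → ℝ≥0∞} {n : ℕ} (hν : ∀ k ≤ n, ν k = 1) :
    1 - ∑' k, w k * ν k ≤ 1 - ∑ k ∈ range (n + 1), w k := by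
  gcongr
  calc ∑ k ∈ range (n + 1), w k = ∑ k ∈ range (n + 1), w k * ν k :=
        sum_congr rfl fun k hk => by rw [hν k (mem_range_succ_iff.1 hk), mul_one]
    _ ≤ ∑' k, w k * ν k := ENNReal.sum_le_tsum _

theorem one_sub_sum_range_div_two_le {w ν : ℕ → ℝ≥0∞} {n : ℕ} (hw : ∑' k, w k = 1)
    (hν : ∀ k ≤ n, ν k = 1) (hν' : ∀ k, n < k → ν k ≤ 2⁻¹) :
    (1 - ∑ k ∈ range (n + 1), w k) / 2 ≤ 1 - ∑' k, w k * ν k := by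
  set W := ∑ k ∈ range (n + 1), w k
  set R := ∑' i, w (i + (n + 1))
  have hWR : W + R = 1 := by rw [← hw]; exact ENNReal.summable.sum_add_tsum_nat_add'
  have hW : W ≠ ∞ := ne_top_of_le_ne_top ENNReal.one_ne_top (hWR ▸ le_self_add)
  have hR : R ≠ ∞ := ne_top_of_le_ne_top ENNReal.one_ne_top (hWR ▸ le_add_self)
  have hmass : ∑' k, w k * ν k ≤ W + R / 2 := by
    rw [← ENNReal.summable.sum_add_tsum_nat_add' (k := n + 1), div_eq_mul_inv,
      ← ENNReal.tsum_mul_right]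
    refine add_le_add (sum_congr rfl fun k hk => ?_).le (ENNReal.tsum_le_tsum fun i => ?_)
    · rw [hν k (mem_range_succ_iff.1 hk), mul_one]
    · gcongr; exact hν' _ (by omega)
  calc (1 - W) / 2 = R - R / 2 := by
        rw [← hWR, ENNReal.add_sub_cancel_left hW, ENNReal.sub_half hR]
    _ = (W + R) - (W + R / 2) := by rw [ENNReal.add_sub_add_eq_sub_left hW]
    _ ≤ 1 - ∑' k, w k * ν k := by rw [hWR]; gcongr

theorem summable_toReal_iff {α : Type*} {f : α → ℝ≥0∞} (hf : ∀ a, f a ≠ ∞) :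
    Summable (fun a => (f a).toReal) ↔ ∑' a, f a ≠ ∞ :=
  ⟨fun h => by simpa [ENNReal.ofReal_toReal (hf _)] using h.tsum_ofReal_ne_top,
    ENNReal.summable_toReal⟩

theorem ofReal_inv_mul_one_sub {N s : ℝ} (hN : 0 < N) (hs : 0 ≤ s) (hs1 : s < 1) :
    ENNReal.ofReal ((N * (1 - s))⁻¹) = (ENNReal.ofReal N * (1 - ENNReal.ofReal s))⁻¹ := by
  rw [ENNReal.ofReal_inv_of_pos (_root_.mul_pos hN (by linarith)), ENNReal.ofReal_mul hN.le,
    ENNReal.ofReal_sub _ hs, ENNReal.ofReal_one]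

end ENNReal

theorem summable_iff_tsum_ofReal_ne_top {α : Type*} {f : α → ℝ} (hf : ∀ a, 0 ≤ f a) :
    Summable f ↔ ∑' a, ENNReal.ofReal (f a) ≠ ∞ := by
  simpa [ENNReal.toReal_ofReal (hf _)] using
    ENNReal.summable_toReal_iff fun a => ENNReal.ofReal_ne_top (r := f a)

section Convolution

variable {G : Type*} [Group G]

noncomputable def econv (f g : G → ℝ≥0∞) : G → ℝ≥0∞ :=
  fun x => ∑' y, f y * g (y⁻¹ * x)

noncomputable def econvPow (f : G → ℝ≥0∞) : ℕ → G → ℝ≥0∞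
  | 0 => fun x => if x = 1 then 1 else 0
  | n + 1 => econv f (econvPow f n)

theorem econv_apply_eq_tsum_mul_inv (f g : G → ℝ≥0∞) (x : G) :
    econv f g x = ∑' z, f (x * z⁻¹) * g z := by
  rw [econv, ← ((Equiv.inv G).trans (Equiv.mulLeft x)).tsum_eq]
  simp [mul_assoc]

theorem econvPow_one (f : G → ℝ≥0∞) : econvPow f 1 = f := by
  funext x
  simp [econvPow, econv, inv_mul_eq_one]

theorem econvPow_le_one {f : G → ℝ≥0∞} (hf : ∑' x, f x ≤ 1) (n : ℕ) (x : G) :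
    econvPow f n x ≤ 1 := by
  induction n generalizing x with
  | zero => simp only [econvPow]; split_ifs <;> simp
  | succ n ih =>
    calc econvPow f (n + 1) x ≤ ∑' y, f y * 1 :=
          ENNReal.tsum_le_tsum fun y => by gcongr; exact ih _
      _ ≤ 1 := by simpa using hf

theorem econv_tsum_mul_tsum_mul {e : ℕ → G → ℝ≥0∞}
    (he : ∀ j k, econv (e j) (e k) = e (max j k)) (a b : ℕ → ℝ≥0∞) :
    econv (fun x => ∑' j, a j * e j x) (fun x => ∑' k, b k * e k x) =
      fun x =>
        ∑' l, (a l * ∑ i ∈ range l, b i + (∑ i ∈ range (l + 1), a i) * b l) * e l x := by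
  funext x
  calc econv (fun x => ∑' j, a j * e j x) (fun x => ∑' k, b k * e k x) x
      = ∑' y, ∑' j, ∑' k, a j * b k * (e j y * e k (y⁻¹ * x)) := by
        refine tsum_congr fun y => ?_
        rw [← ENNReal.tsum_mul_right]
        refine tsum_congr fun j => ?_
        rw [← ENNReal.tsum_mul_left]
        exact tsum_congr fun k => by ring
    _ = ∑' j, ∑' k, a j * b k * econv (e j) (e k) x := by
        rw [ENNReal.tsum_comm]
        refine tsum_congr fun j => ?_
        rw [ENNReal.tsum_comm]
        exact tsum_congr fun k => ENNReal.tsum_mul_left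
    _ = ∑' j, ∑' k, a j * b k * e (max j k) x := by simp only [he]
    _ = _ := by
        rw [ENNReal.tsum_tsum_eq_tsum_sum_range_add_sum_range]
        refine tsum_congr fun l => ?_
        rw [add_mul, mul_sum, sum_mul, sum_mul, sum_mul]
        congr 1
        · exact sum_congr rfl fun i hi => by rw [max_eq_left (mem_range.1 hi).le]
        · exact sum_congr rfl fun i hi => by rw [max_eq_right (mem_range_succ_iff.1 hi)]

theorem econvPow_tsum_mul {e : ℕ → G → ℝ≥0∞}
    (he : ∀ j k, econv (e j) (e k) = e (max j k))
    {w : ℕ → ℝ≥0∞} (hw : ∀ k, w k ≠ ∞) (n : ℕ) :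
    econvPow (fun x => ∑' k, w k * e k x) (n + 1) = fun x =>
      ∑' l, ((∑ i ∈ range (l + 1), w i) ^ (n + 1) - (∑ i ∈ range l, w i) ^ (n + 1)) *
        e l x := by
  set W : ℕ → ℝ≥0∞ := fun l => ∑ i ∈ range l, w i
  have hW_succ : ∀ l, W (l + 1) = W l + w l := fun l => sum_range_succ w l
  have hW_ne_top : ∀ l, W l ≠ ∞ := fun l => ENNReal.sum_ne_top.2 fun i _ => hw i
  have hW_pow_mono : ∀ m l, W l ^ m ≤ W (l + 1) ^ m := fun m l => by
    gcongr; exact le_self_add.trans_eq (hW_succ l).symm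
  have htelescope :
      ∀ m l, ∑ i ∈ range l, (W (i + 1) ^ (m + 1) - W i ^ (m + 1)) = W l ^ (m + 1) := by
    intro m l
    induction l with
    | zero => simp [W]
    | succ l ih => rw [sum_range_succ, ih, add_tsub_cancel_of_le (hW_pow_mono _ l)]
  have hstep : ∀ m l, w l * W l ^ (m + 1) + W (l + 1) * (W (l + 1) ^ (m + 1) - W l ^ (m + 1))
      = W (l + 1) ^ (m + 2) - W l ^ (m + 2) := by
    intro m l
    refine ENNReal.eq_sub_of_add_eq (ENNReal.pow_ne_top (hW_ne_top l)) ?_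
    calc w l * W l ^ (m + 1) + W (l + 1) * (W (l + 1) ^ (m + 1) - W l ^ (m + 1)) + W l ^ (m + 2)
        = W (l + 1) * (W l ^ (m + 1) + (W (l + 1) ^ (m + 1) - W l ^ (m + 1))) := by
          rw [hW_succ]; ring
      _ = W (l + 1) ^ (m + 2) := by rw [add_tsub_cancel_of_le (hW_pow_mono _ l)]; ring
  have key : ∀ m, econvPow (fun x => ∑' k, w k * e k x) (m + 1) =
      fun x => ∑' l, (W (l + 1) ^ (m + 1) - W l ^ (m + 1)) * e l x := by
    intro m
    induction m with
    | zero =>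
      simp only [zero_add, pow_one, econvPow_one, hW_succ,
        ENNReal.add_sub_cancel_left (hW_ne_top _)]
    | succ m ih =>
      rw [econvPow, ih, econv_tsum_mul_tsum_mul he]
      simp only [htelescope]
      exact funext fun x => tsum_congr fun l => by rw [← hstep]
  exact key n

theorem tsum_econvPow_tsum_mul {e : ℕ → G → ℝ≥0∞}
    (he : ∀ j k, econv (e j) (e k) = e (max j k))
    {w : ℕ → ℝ≥0∞} (hw : ∀ l, ∑ i ∈ range l, w i < 1) (x : G) :
    ∑' n, econvPow (fun x => ∑' k, w k * e k x) (n + 1) x =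
      ∑' l, ((1 - ∑ i ∈ range (l + 1), w i)⁻¹ - (1 - ∑ i ∈ range l, w i)⁻¹) *
        e l x := by
  have hw_ne_top : ∀ k, w k ≠ ∞ := fun k =>
    ne_top_of_le_ne_top (hw (k + 1)).ne_top (single_le_sum (by simp) (self_mem_range_succ k))
  simp only [econvPow_tsum_mul he hw_ne_top]
  rw [ENNReal.tsum_comm]
  refine tsum_congr fun l => ?_
  rw [ENNReal.tsum_mul_right, ENNReal.tsum_pow_succ_sub_pow_succ _ (hw l)]
  simp [sum_range_succ]

theorem gconvPow_eq_toReal_econvPow {f : G → ℝ} (hf : ∀ x, 0 ≤ f x)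
    (hmass : ∑' x, ENNReal.ofReal (f x) ≤ 1) (n : ℕ) (x : G) :
    gconvPow f n x = (econvPow (fun x => ENNReal.ofReal (f x)) n x).toReal := by
  induction n generalizing x with
  | zero => simp only [gconvPow, econvPow]; split_ifs <;> simp
  | succ n ih =>
    have hfin :
        ∀ y, ENNReal.ofReal (f y) *
          econvPow (fun x => ENNReal.ofReal (f x)) n (y⁻¹ * x) ≠ ∞ :=
      fun y => ENNReal.mul_ne_top ENNReal.ofReal_ne_top
        (ne_top_of_le_ne_top ENNReal.one_ne_top (econvPow_le_one hmass n _))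
    rw [gconvPow, econvPow, econv, ENNReal.tsum_toReal_eq hfin]
    exact tsum_congr fun y => by rw [ih, ENNReal.toReal_mul, ENNReal.toReal_ofReal (hf y)]

theorem summable_gconvPow_iff {f : G → ℝ} (hf : ∀ x, 0 ≤ f x)
    (hmass : ∑' x, ENNReal.ofReal (f x) ≤ 1) (x : G) :
    Summable (fun n => gconvPow f (n + 1) x) ↔
      ∑' n, econvPow (fun x => ENNReal.ofReal (f x)) (n + 1) x ≠ ∞ := by
  simp only [gconvPow_eq_toReal_econvPow hf hmass]
  exact ENNReal.summable_toReal_iff fun n =>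
    ne_top_of_le_ne_top ENNReal.one_ne_top (econvPow_le_one hmass _ _)

namespace Subgroup

theorem two_mul_card_le_card_of_lt {L K : Subgroup G} [Finite K] (h : L < K) :
    2 * Nat.card L ≤ Nat.card K := by
  have : Finite L := Finite.of_injective _ (inclusion_injective h.le)
  obtain ⟨t, ht⟩ := card_dvd_of_le h.le
  have hlt : Nat.card L < Nat.card K := by
    have := Set.ncard_lt_ncard (SetLike.coe_ssubset_coe.2 h) (Set.toFinite (K : Set G))
    rwa [← Nat.card_coe_set_eq, ← Nat.card_coe_set_eq] at this
  have hL : 0 < Nat.card L := Nat.card_pos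
  have ht2 : 2 ≤ t := by
    by_contra! ht2
    interval_cases t <;> simp_all
  rw [ht, mul_comm]
  exact Nat.mul_le_mul_left _ ht2

theorem card_mul_inv_card_le_inv_two_of_lt {L K : Subgroup G} [Finite K] (h : L < K) :
    (Nat.card L : ℝ≥0∞) * (Nat.card K : ℝ≥0∞)⁻¹ ≤ 2⁻¹ := by
  rw [ENNReal.le_inv_iff_mul_le, mul_right_comm,
    ENNReal.mul_inv_le_iff (by simp [Nat.card_pos.ne']) (ENNReal.natCast_ne_top _), one_mul,
    mul_comm]
  exact_mod_cast two_mul_card_le_card_of_lt h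

noncomputable def uniformDensity (K : Subgroup G) : G → ℝ≥0∞ :=
  fun x => if x ∈ K then (Nat.card K : ℝ≥0∞)⁻¹ else 0

variable {K L : Subgroup G}

theorem tsum_uniformDensity [Finite K] : ∑' x, K.uniformDensity x = 1 := by
  calc ∑' x, K.uniformDensity x = ∑' _ : K, (Nat.card K : ℝ≥0∞)⁻¹ :=
        (tsum_subtype (K : Set G) fun _ => (Nat.card K : ℝ≥0∞)⁻¹).symm
    _ = 1 := by
        rw [ENNReal.tsum_const, ENat.card_eq_coe_natCard]
        exact ENNReal.mul_inv_cancel (by simp [Nat.card_pos.ne']) (ENNReal.natCast_ne_top _)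

theorem uniformDensity_inv_mul {y : G} (hy : y ∈ K) (x : G) :
    K.uniformDensity (y⁻¹ * x) = K.uniformDensity x := by
  simp [uniformDensity, K.mul_mem_cancel_left (K.inv_mem hy)]

theorem uniformDensity_mul_inv {z : G} (hz : z ∈ K) (x : G) :
    K.uniformDensity (x * z⁻¹) = K.uniformDensity x := by
  simp [uniformDensity, K.mul_mem_cancel_right (K.inv_mem hz)]

theorem econv_uniformDensity_of_le [Finite K] (hKL : K ≤ L) :
    econv K.uniformDensity L.uniformDensity = L.uniformDensity := by
  funext x
  calc econv K.uniformDensity L.uniformDensity x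
        = ∑' y, K.uniformDensity y * L.uniformDensity x :=
        tsum_congr fun y => by
          by_cases hy : y ∈ K
          · rw [uniformDensity_inv_mul (hKL hy)]
          · simp [uniformDensity, hy]
    _ = L.uniformDensity x := by rw [ENNReal.tsum_mul_right, tsum_uniformDensity, one_mul]

theorem econv_uniformDensity_of_ge [Finite L] (hLK : L ≤ K) :
    econv K.uniformDensity L.uniformDensity = K.uniformDensity := by
  funext x
  calc econv K.uniformDensity L.uniformDensity x
        = ∑' z, K.uniformDensity x * L.uniformDensity z := by
        rw [econv_apply_eq_tsum_mul_inv]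
        refine tsum_congr fun z => ?_
        by_cases hz : z ∈ L
        · rw [uniformDensity_mul_inv (hLK hz)]
        · simp [uniformDensity, hz]
    _ = K.uniformDensity x := by rw [ENNReal.tsum_mul_left, tsum_uniformDensity, mul_one]

theorem sum_uniformDensity_of_le [Finite K] (hKL : K ≤ L) (hL : (L : Set G).Finite) :
    ∑ x ∈ hL.toFinset, K.uniformDensity x = 1 := by
  rw [← tsum_uniformDensity (K := K)]
  refine (tsum_eq_sum fun x hx => ?_).symm
  simp only [Set.Finite.mem_toFinset, SetLike.mem_coe] at hx
  simp [uniformDensity, mt (@hKL x) hx]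

theorem sum_uniformDensity_of_ge (hLK : L ≤ K) (hL : (L : Set G).Finite) :
    ∑ x ∈ hL.toFinset, K.uniformDensity x = Nat.card L * (Nat.card K : ℝ≥0∞)⁻¹ := by
  simp only [uniformDensity]
  rw [sum_congr rfl fun x hx => if_pos (hLK (hL.mem_toFinset.1 hx)), sum_const,
    ← Nat.card_eq_card_finite_toFinset, nsmul_eq_mul]
  rfl

end Subgroup

noncomputable def uniformMixture (H : ℕ → Subgroup G) (w : ℕ → ℝ≥0∞) :
    G → ℝ≥0∞ :=
  fun x => ∑' k, w k * (H k).uniformDensity x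

section UniformMixture

variable {H : ℕ → Subgroup G} {w : ℕ → ℝ≥0∞}

theorem econv_uniformDensity_max [∀ k, Finite (H k)] (hH : Monotone H) (j k : ℕ) :
    econv (H j).uniformDensity (H k).uniformDensity = (H (max j k)).uniformDensity := by
  rcases le_total j k with h | h
  · rw [max_eq_right h, Subgroup.econv_uniformDensity_of_le (hH h)]
  · rw [max_eq_left h, Subgroup.econv_uniformDensity_of_ge (hH h)]

theorem tsum_uniformMixture [∀ k, Finite (H k)] (hw : ∑' k, w k = 1) :
    ∑' x, uniformMixture H w x = 1 := by
  simp only [uniformMixture]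
  rw [ENNReal.tsum_comm]
  simp [ENNReal.tsum_mul_left, Subgroup.tsum_uniformDensity, hw]

theorem ofReal_tsum_mul_eq_uniformMixture [∀ k, Finite (H k)] {c : ℕ → ℝ}
    (hc : ∀ k, 0 ≤ c k) (hcs : Summable c) {m : ℕ → G → ℝ}
    (hm : ∀ k x, m k x = if x ∈ H k then (Nat.card (H k) : ℝ)⁻¹ else 0) (x : G) :
    ENNReal.ofReal (∑' k, c k * m k x) =
      uniformMixture H (fun k => ENNReal.ofReal (c k)) x := by
  have hm01 : ∀ k, 0 ≤ m k x ∧ m k x ≤ 1 := fun k => by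
    rw [hm]
    split_ifs
    · exact ⟨by positivity, Nat.cast_inv_le_one _⟩
    · simp
  rw [ENNReal.ofReal_tsum_of_nonneg (fun k => mul_nonneg (hc k) (hm01 k).1)
    (hcs.of_nonneg_of_le (fun k => mul_nonneg (hc k) (hm01 k).1)
      (fun k => mul_le_of_le_one_right (hc k) (hm01 k).2))]
  refine tsum_congr fun k => ?_
  rw [ENNReal.ofReal_mul (hc k), hm, Subgroup.uniformDensity]
  split_ifs
  · rw [ENNReal.ofReal_inv_of_pos (by simp [Nat.card_pos]), ENNReal.ofReal_natCast]
  · simp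

theorem tsum_econvPow_uniformMixture_one [∀ k, Finite (H k)] (hH : Monotone H)
    (hw : ∀ l, ∑ i ∈ range l, w i < 1) :
    ∑' n, econvPow (uniformMixture H w) (n + 1) 1 =
      ∑' l, ((1 - ∑ i ∈ range (l + 1), w i)⁻¹ - (1 - ∑ i ∈ range l, w i)⁻¹) *
        (Nat.card (H l) : ℝ≥0∞)⁻¹ := by
  unfold uniformMixture
  rw [tsum_econvPow_tsum_mul (econv_uniformDensity_max hH) hw]
  simp [Subgroup.uniformDensity, (H _).one_mem]

theorem tsum_econvPow_uniformMixture_one_ne_top_iff_sum_range [∀ k, Finite (H k)]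
    (hH : StrictMono H) (hw : ∑' k, w k = 1) (hw0 : ∀ k, w k ≠ 0) :
    ∑' n, econvPow (uniformMixture H w) (n + 1) 1 ≠ ∞ ↔
      ∑' l, ((Nat.card (H l) : ℝ≥0∞) * (1 - ∑ i ∈ range (l + 1), w i))⁻¹ ≠ ∞ := by
  have hW : ∀ l, ∑ i ∈ range l, w i < 1 := fun l =>
    hw ▸ ENNReal.sum_range_lt_tsum (hw ▸ ENNReal.one_ne_top) hw0 l
  have hcard : ∀ l, (Nat.card (H l) : ℝ≥0∞) ≠ 0 := fun l => by simp [Nat.card_pos.ne']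
  rw [tsum_econvPow_uniformMixture_one hH.monotone hW]
  have hinv : ∀ l, ((Nat.card (H l) : ℝ≥0∞) * (1 - ∑ i ∈ range (l + 1), w i))⁻¹ =
      (1 - ∑ i ∈ range (l + 1), w i)⁻¹ * (Nat.card (H l) : ℝ≥0∞)⁻¹ := fun l => by
    rw [ENNReal.mul_inv (Or.inl (hcard l)) (Or.inl (ENNReal.natCast_ne_top _)), mul_comm]
  simp only [hinv]
  refine ENNReal.tsum_sub_mul_ne_top_iff (u := fun l => (1 - ∑ i ∈ range l, w i)⁻¹)
    (a := fun l => (Nat.card (H l) : ℝ≥0∞)⁻¹) ?_ (fun l => ?_) (by simp [hcard])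
  · exact fun i j hij => ENNReal.inv_le_inv.2 <|
      tsub_le_tsub_left (sum_le_sum_of_subset (range_subset_range.2 hij)) 1
  · have h := ENNReal.le_inv_iff_mul_le.1
      (Subgroup.card_mul_inv_card_le_inv_two_of_lt (hH l.lt_succ_self))
    rw [ENNReal.le_inv_iff_mul_le]
    calc 2 * (Nat.card (H (l + 1)) : ℝ≥0∞)⁻¹ * Nat.card (H l)
        = Nat.card (H l) * (Nat.card (H (l + 1)) : ℝ≥0∞)⁻¹ * 2 := by ring
      _ ≤ 1 := h

theorem sum_uniformMixture_eq (hfin : ∀ k, (H k : Set G).Finite) (n : ℕ) :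
    ∑ x ∈ (hfin n).toFinset, uniformMixture H w x =
      ∑' k, w k * ∑ x ∈ (hfin n).toFinset, (H k).uniformDensity x := by
  simp only [uniformMixture, mul_sum]
  exact (Summable.tsum_finsetSum fun _ _ => ENNReal.summable).symm

theorem one_sub_sum_uniformMixture_bounds [∀ k, Finite (H k)] (hH : StrictMono H)
    (hfin : ∀ k, (H k : Set G).Finite) (hw : ∑' k, w k = 1) (n : ℕ) :
    (1 - ∑ i ∈ range (n + 1), w i) / 2 ≤
        1 - ∑ x ∈ (hfin n).toFinset, uniformMixture H w x ∧
      1 - ∑ x ∈ (hfin n).toFinset, uniformMixture H w x ≤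
        1 - ∑ i ∈ range (n + 1), w i := by
  have hν : ∀ k ≤ n, ∑ x ∈ (hfin n).toFinset, (H k).uniformDensity x = 1 := fun k hk =>
    Subgroup.sum_uniformDensity_of_le (hH.monotone hk) _
  have hν' : ∀ k, n < k → ∑ x ∈ (hfin n).toFinset, (H k).uniformDensity x ≤ 2⁻¹ :=
    fun k hk => by
      rw [Subgroup.sum_uniformDensity_of_ge (hH.monotone hk.le)]
      exact Subgroup.card_mul_inv_card_le_inv_two_of_lt (hH hk)
  rw [sum_uniformMixture_eq]
  exact ⟨ENNReal.one_sub_sum_range_div_two_le hw hν hν', ENNReal.one_sub_tsum_mul_le hν⟩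

theorem sum_uniformMixture_lt_one [∀ k, Finite (H k)] (hH : StrictMono H)
    (hfin : ∀ k, (H k : Set G).Finite) (hw : ∑' k, w k = 1) (hw0 : ∀ k, w k ≠ 0) (n : ℕ) :
    ∑ x ∈ (hfin n).toFinset, uniformMixture H w x < 1 := by
  have hW := hw ▸ ENNReal.sum_range_lt_tsum (hw ▸ ENNReal.one_ne_top) hw0 (n + 1)
  refine tsub_pos_iff_lt.1 (lt_of_lt_of_le ?_ (one_sub_sum_uniformMixture_bounds hH hfin hw n).1)
  exact ENNReal.div_pos (tsub_pos_of_lt hW).ne' ENNReal.ofNat_ne_top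

theorem tsum_econvPow_uniformMixture_one_ne_top_iff [∀ k, Finite (H k)] (hH : StrictMono H)
    (hfin : ∀ k, (H k : Set G).Finite) (hw : ∑' k, w k = 1) (hw0 : ∀ k, w k ≠ 0) :
    ∑' n, econvPow (uniformMixture H w) (n + 1) 1 ≠ ∞ ↔
      ∑' n, ((Nat.card (H n) : ℝ≥0∞) *
        (1 - ∑ x ∈ (hfin n).toFinset, uniformMixture H w x))⁻¹ ≠ ∞ := by
  rw [tsum_econvPow_uniformMixture_one_ne_top_iff_sum_range hH hw hw0]
  refine (ENNReal.tsum_inv_ne_top_iff_of_le (fun n => ?_) (fun n => ?_)).symm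
  · rw [mul_div_assoc]
    exact mul_le_mul' le_rfl (one_sub_sum_uniformMixture_bounds hH hfin hw n).1
  · exact mul_le_mul' le_rfl (one_sub_sum_uniformMixture_bounds hH hfin hw n).2

end UniformMixture

end Convolution

theorem stmt_8_general {G : Type*} [Group G]
    (H : ℕ → Subgroup G) (hfin : ∀ k, (H k : Set G).Finite)
    (hlt : ∀ k, H k < H (k + 1))
    (c : ℕ → ℝ) (hc : ∀ k, 0 < c k) (hcsum : ∑' k : ℕ, c k = 1)
    (m : ℕ → G → ℝ)
    (hm : ∀ (k : ℕ) (x : G),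
      m k x = if x ∈ H k then ((Nat.card (H k) : ℝ))⁻¹ else 0)
    (μ : G → ℝ) (hμ : ∀ x : G, μ x = ∑' k : ℕ, c k * m k x) :
    (¬ Summable (fun n : ℕ => gconvPow μ (n + 1) (1 : G))) ↔
      ¬ Summable (fun n : ℕ =>
        ((Nat.card (H n) : ℝ) * (1 - ∑ x ∈ (hfin n).toFinset, μ x))⁻¹) := by
  have : ∀ k, Finite (H k) := fun k => (hfin k).to_subtype
  have hH : StrictMono H := strictMono_nat_of_lt_succ hlt
  have hc_summable : Summable c := by
    by_contra h
    simp [tsum_eq_zero_of_not_summable h] at hcsum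
  set w : ℕ → ℝ≥0∞ := fun k => ENNReal.ofReal (c k)
  have hw : ∑' k, w k = 1 := by
    rw [← ENNReal.ofReal_tsum_of_nonneg (fun k => (hc k).le) hc_summable, hcsum,
      ENNReal.ofReal_one]
  have hw0 : ∀ k, w k ≠ 0 := fun k => (ENNReal.ofReal_pos.2 (hc k)).ne'
  have hμ0 : ∀ x, 0 ≤ μ x := fun x => by
    rw [hμ]
    exact tsum_nonneg fun k => mul_nonneg (hc k).le (by rw [hm]; positivity)
  have hμw : (fun x => ENNReal.ofReal (μ x)) = uniformMixture H w := funext fun x => by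
    rw [hμ]
    exact ofReal_tsum_mul_eq_uniformMixture (fun k => (hc k).le) hc_summable hm x
  have hmass : ∀ n, ENNReal.ofReal (∑ x ∈ (hfin n).toFinset, μ x) =
      ∑ x ∈ (hfin n).toFinset, uniformMixture H w x := fun n => by
    rw [ENNReal.ofReal_sum_of_nonneg fun x _ => hμ0 x, ← hμw]
  have hlt1 : ∀ n, ∑ x ∈ (hfin n).toFinset, μ x < 1 := fun n => by
    rw [← ENNReal.ofReal_lt_one, hmass]
    exact sum_uniformMixture_lt_one hH hfin hw hw0 n
  rw [not_iff_not, summable_gconvPow_iff hμ0 (hμw ▸ (tsum_uniformMixture hw).le), hμw,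
    summable_iff_tsum_ofReal_ne_top fun n =>
      inv_nonneg.2 (mul_nonneg (Nat.cast_nonneg _) (sub_nonneg.2 (hlt1 n).le))]
  simp only [ENNReal.ofReal_inv_mul_one_sub (Nat.cast_pos.2 Nat.card_pos)
    (sum_nonneg fun x _ => hμ0 x) (hlt1 _), hmass, ENNReal.ofReal_natCast]
  exact tsum_econvPow_uniformMixture_one_ne_top_iff hH hfin hw hw0

/-- Proposition 4.2 (recurrence criterion): the random walk with law
`μ = ∑_k c_k m_k` is recurrent (i.e. `∑_{n≥1} μ^{*n}(e) = ∞`) if and only if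
`∑_n 1/(|G_n| (1 - μ(G_n))) = ∞`. -/
theorem stmt_8 {G : Type*} [Group G]
    (H : ℕ → Subgroup G) (hfin : ∀ k, (H k : Set G).Finite)
    (hlt : ∀ k, H k < H (k + 1)) (hunion : ∀ x : G, ∃ k, x ∈ H k)
    (c : ℕ → ℝ) (hc : ∀ k, 0 < c k) (hcsum : ∑' k : ℕ, c k = 1)
    (m : ℕ → G → ℝ)
    (hm : ∀ (k : ℕ) (x : G),
      m k x = if x ∈ H k then ((Nat.card (H k) : ℝ))⁻¹ else 0)
    (μ : G → ℝ) (hμ : ∀ x : G, μ x = ∑' k : ℕ, c k * m k x) :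
    (¬ Summable (fun n : ℕ => gconvPow μ (n + 1) (1 : G))) ↔
      ¬ Summable (fun n : ℕ =>
        ((Nat.card (H n) : ℝ) * (1 - ∑ x ∈ (hfin n).toFinset, μ x))⁻¹) :=
  stmt_8_general H hfin hlt c hc hcsum m hm μ hμ
end

section
/- For every nonempty finite subset U ⊆ G, λ₁(U) ≥ T(|U|); that is, for every f : G → ℝ supported in U, ((I−P)f, f)_{ℓ²} ≥ T(|U|) · ‖f‖²_{ℓ²}. Consequently, the isospectral profile satisfies Λ(v) ≥ T(v) for every v ≥ 1. -/
open scoped BigOperators Classical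

/-- The bottom of the Dirichlet spectrum of `I - P` on a finite set `U`:
`λ₁(U) = inf { ((I-P)f, f)/‖f‖² : f ≠ 0, supp f ⊆ U }`. -/
noncomputable def lamOne {G : Type*} [Group G]
    (P : (G → ℝ) → G → ℝ) (U : Finset G) : ℝ :=
  sInf {r : ℝ | ∃ f : G → ℝ, (∀ x ∉ U, f x = 0) ∧ f ≠ 0 ∧
    r = (∑' x : G, (f x - P f x) * f x) / ∑' x : G, (f x) ^ 2}

/-- The `L²`-isospectral profile `Λ(v) = inf { λ₁(U) : U finite nonempty, |U| ≤ v }`. -/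
noncomputable def isoProfile {G : Type*} [Group G]
    (P : (G → ℝ) → G → ℝ) (v : ℝ) : ℝ :=
  sInf {r : ℝ | ∃ U : Finset G, U.Nonempty ∧ ((U.card : ℝ)) ≤ v ∧ r = lamOne P U}

/-!
Writing `μ = ∑ₖ cₖ mₖ`, the quadratic form is
`((I - P)f, f) = ‖f‖² - ∑_{x,y ∈ U} f(y) μ(y⁻¹x) f(x)`. By Schur's test the double sum is at most
`M ‖f‖²`, where `M` bounds the row and column sums `∑_{y ∈ U} μ(y⁻¹x)` and `∑_{x ∈ U} μ(y⁻¹x)`.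
Each such sum evaluates `mₖ` at `|U|` distinct points, so its `mₖ`-part is at most
`min(1, |U|/|Gₖ|)`, giving `M = ∑ₖ cₖ min(1, |U|/|Gₖ|) = 1 - T(|U|)`.
The bound on `Λ` follows because `T` is nonincreasing.
-/

open Finset

theorem Finset.sum_sum_mul_kernel_mul_le {α : Type*} (U : Finset α) (K : α → α → ℝ)
    (f : α → ℝ) (M : ℝ) (hK : ∀ x ∈ U, ∀ y ∈ U, 0 ≤ K y x)
    (hrow : ∀ x ∈ U, ∑ y ∈ U, K y x ≤ M) (hcol : ∀ y ∈ U, ∑ x ∈ U, K y x ≤ M) :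
    ∑ x ∈ U, ∑ y ∈ U, f y * K y x * f x ≤ M * ∑ x ∈ U, f x ^ 2 := by
  have amgm : ∀ x ∈ U, ∀ y ∈ U,
      f y * K y x * f x ≤ (f y ^ 2 * K y x + f x ^ 2 * K y x) / 2 := fun x hx y hy => by
    nlinarith [mul_nonneg (hK x hx y hy) (sq_nonneg (f x - f y))]
  calc ∑ x ∈ U, ∑ y ∈ U, f y * K y x * f x
      ≤ ∑ x ∈ U, ∑ y ∈ U, (f y ^ 2 * K y x + f x ^ 2 * K y x) / 2 :=
        sum_le_sum fun x hx => sum_le_sum fun y hy => amgm x hx y hy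
    _ = (∑ y ∈ U, f y ^ 2 * ∑ x ∈ U, K y x + ∑ x ∈ U, f x ^ 2 * ∑ y ∈ U, K y x) / 2 := by
        simp only [← sum_div, sum_add_distrib, mul_sum]
        rw [sum_comm (f := fun x y => f y ^ 2 * K y x)]
    _ ≤ (∑ y ∈ U, f y ^ 2 * M + ∑ x ∈ U, f x ^ 2 * M) / 2 := by
        gcongr with y hy x hx
        · exact hcol y hy
        · exact hrow x hx
    _ = M * ∑ x ∈ U, f x ^ 2 := by rw [← sum_mul]; ring

-- On an infinite set `Nat.card` is `0`, so the density vanishes there.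
noncomputable def uniformDensity {β : Type*} (S : Set β) (x : β) : ℝ :=
  if x ∈ S then (Nat.card S : ℝ)⁻¹ else 0

theorem uniformDensity_nonneg {β : Type*} (S : Set β) (x : β) : 0 ≤ uniformDensity S x := by
  unfold uniformDensity; split_ifs <;> positivity

theorem uniformDensity_le_one {β : Type*} (S : Set β) (x : β) : uniformDensity S x ≤ 1 := by
  unfold uniformDensity; split_ifs
  · exact Nat.cast_inv_le_one _
  · exact zero_le_one

theorem sum_uniformDensity_comp_le {α β : Type*} (S : Set β) (s : Finset α) {g : α → β}
    (hg : Set.InjOn g s) :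
    ∑ y ∈ s, uniformDensity S (g y) ≤ min 1 ((s.card : ℝ) / Nat.card S) := by
  set t := s.filter fun y => g y ∈ S
  have hsum : ∑ y ∈ s, uniformDensity S (g y) = t.card * (Nat.card S : ℝ)⁻¹ := by
    simp only [uniformDensity, ← sum_filter, sum_const, nsmul_eq_mul, t]
  have ht_le : t.card ≤ s.card := card_filter_le _ _
  rw [hsum, div_eq_mul_inv]
  refine le_min ?_ (by gcongr)
  rcases S.finite_or_infinite with hS | hS
  · have ht_card : t.card ≤ Nat.card S := by
      rw [← Set.ncard_coe_finset, ← Nat.card_coe_set_eq]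
      exact Set.ncard_le_ncard_of_injOn g (fun y hy => (mem_filter.1 hy).2)
        (hg.mono fun y hy => (mem_filter.1 hy).1) hS
    calc (t.card : ℝ) * (Nat.card S : ℝ)⁻¹ ≤ Nat.card S * (Nat.card S : ℝ)⁻¹ := by gcongr
      _ ≤ 1 := mul_inv_le_one
  · simp [hS.card_eq_zero]

theorem summable_mul_of_le_one {ι : Type*} {c a : ι → ℝ} (hc0 : ∀ k, 0 ≤ c k) (hcs : Summable c)
    (ha0 : ∀ k, 0 ≤ a k) (ha1 : ∀ k, a k ≤ 1) : Summable fun k => c k * a k :=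
  hcs.of_nonneg_of_le (fun k => mul_nonneg (hc0 k) (ha0 k))
    fun k => mul_le_of_le_one_right (hc0 k) (ha1 k)

theorem summable_mul_min_one_div {ι : Type*} {c : ι → ℝ} (hc0 : ∀ k, 0 ≤ c k)
    (hcs : Summable c) (N : ι → ℕ) {u : ℝ} (hu : 0 ≤ u) :
    Summable fun k => c k * min 1 (u / N k) :=
  summable_mul_of_le_one hc0 hcs (fun _ => le_min zero_le_one (by positivity))
    fun _ => min_le_left _ _

theorem tsum_mul_min_one_div_mono {ι : Type*} {c : ι → ℝ} (hc0 : ∀ k, 0 ≤ c k)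
    (hcs : Summable c) (N : ι → ℕ) {u v : ℝ} (hu : 0 ≤ u) (huv : u ≤ v) :
    ∑' k, c k * min 1 (u / N k) ≤ ∑' k, c k * min 1 (v / N k) :=
  (summable_mul_min_one_div hc0 hcs N hu).tsum_le_tsum
    (fun k => mul_le_mul_of_nonneg_left (by gcongr) (hc0 k))
    (summable_mul_min_one_div hc0 hcs N (hu.trans huv))

theorem sum_tsum_mul_uniformDensity_le {ι α β : Type*} (S : ι → Set β) {c : ι → ℝ}
    (hc0 : ∀ k, 0 ≤ c k) (hcs : Summable c) (s : Finset α) {g : α → β} (hg : Set.InjOn g s) :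
    ∑ y ∈ s, ∑' k, c k * uniformDensity (S k) (g y) ≤
      ∑' k, c k * min 1 ((s.card : ℝ) / Nat.card (S k)) := by
  rw [← Summable.tsum_finsetSum fun y _ => summable_mul_of_le_one hc0 hcs
    (fun k => uniformDensity_nonneg (S k) (g y)) (fun k => uniformDensity_le_one (S k) (g y))]
  refine Summable.tsum_le_tsum (fun k => ?_) (summable_sum fun y _ => ?_)
    (summable_mul_min_one_div hc0 hcs _ s.card.cast_nonneg)
  · rw [← mul_sum]
    exact mul_le_mul_of_nonneg_left (sum_uniformDensity_comp_le (S k) s hg) (hc0 k)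
  · exact summable_mul_of_le_one hc0 hcs (fun k => uniformDensity_nonneg (S k) (g y))
      (fun k => uniformDensity_le_one (S k) (g y))

theorem mul_tsum_sq_le_tsum_sub_conv_mul {G : Type*} [Group G] {μ : G → ℝ} (hμ : ∀ x, 0 ≤ μ x)
    {P : (G → ℝ) → G → ℝ} (hP : ∀ (g : G → ℝ) (x : G), P g x = ∑' y : G, g y * μ (y⁻¹ * x))
    {U : Finset G} {M : ℝ} (hrow : ∀ x ∈ U, ∑ y ∈ U, μ (y⁻¹ * x) ≤ M)
    (hcol : ∀ y ∈ U, ∑ x ∈ U, μ (y⁻¹ * x) ≤ M) {f : G → ℝ} (hf : ∀ x ∉ U, f x = 0) :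
    (1 - M) * ∑' x, f x ^ 2 ≤ ∑' x, (f x - P f x) * f x := by
  have hPf : ∀ x, P f x = ∑ y ∈ U, f y * μ (y⁻¹ * x) := fun x =>
    (hP f x).trans (tsum_eq_sum fun y hy => by rw [hf y hy, zero_mul])
  have hschur := U.sum_sum_mul_kernel_mul_le (fun y x => μ (y⁻¹ * x)) f M
    (fun _ _ _ _ => hμ _) hrow hcol
  rw [tsum_eq_sum (s := U) fun x hx => by simp [hf x hx],
    tsum_eq_sum (s := U) fun x hx => by simp [hf x hx]]
  calc (1 - M) * ∑ x ∈ U, f x ^ 2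
      ≤ ∑ x ∈ U, f x ^ 2 - ∑ x ∈ U, ∑ y ∈ U, f y * μ (y⁻¹ * x) * f x := by linarith
    _ = ∑ x ∈ U, (f x - P f x) * f x := by
        rw [← sum_sub_distrib]
        refine sum_congr rfl fun x _ => ?_
        rw [hPf, sub_mul, sum_mul]
        ring

theorem le_lamOne {G : Type*} [Group G] {P : (G → ℝ) → G → ℝ} {U : Finset G} (hU : U.Nonempty)
    {t : ℝ} (h : ∀ f : G → ℝ, (∀ x ∉ U, f x = 0) →
      t * ∑' x, f x ^ 2 ≤ ∑' x, (f x - P f x) * f x) :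
    t ≤ lamOne P U := by
  obtain ⟨a, ha⟩ := hU
  have hsingle : ∀ x ∉ U, (Pi.single a 1 : G → ℝ) x = 0 := fun x hx =>
    Pi.single_eq_of_ne (fun hxa : x = a => hx (hxa ▸ ha)) _
  refine le_csInf ⟨_, Pi.single a 1, hsingle, Pi.single_ne_zero_iff.2 one_ne_zero, rfl⟩ ?_
  rintro r ⟨f, hf, hne, rfl⟩
  obtain ⟨x, hx⟩ := Function.ne_iff.1 hne
  have hpos : 0 < ∑' x, f x ^ 2 :=
    (summable_of_ne_finset_zero (s := U) fun x hx => by simp [hf x hx]).tsum_pos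
      (fun _ => sq_nonneg _) x (sq_pos_of_ne_zero hx)
  exact (le_div_iff₀ hpos).2 (h f hf)

theorem le_isoProfile {G : Type*} [Group G] (P : (G → ℝ) → G → ℝ) {v : ℝ} (hv : 1 ≤ v) {t : ℝ}
    (h : ∀ U : Finset G, U.Nonempty → (U.card : ℝ) ≤ v → t ≤ lamOne P U) :
    t ≤ isoProfile P v :=
  le_csInf ⟨_, {1}, singleton_nonempty 1, by simpa using hv, rfl⟩
    fun _ ⟨U, hU, hUv, hr⟩ => hr ▸ h U hU hUv

theorem stmt_13_general {G : Type*} [Group G]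
    (H : ℕ → Subgroup G)
    (c : ℕ → ℝ) (hc : ∀ k, 0 < c k) (hcsum : ∑' k : ℕ, c k = 1)
    (m : ℕ → G → ℝ)
    (hm : ∀ (k : ℕ) (x : G),
      m k x = if x ∈ H k then ((Nat.card (H k) : ℝ))⁻¹ else 0)
    (μ : G → ℝ) (hμ : ∀ x : G, μ x = ∑' k : ℕ, c k * m k x)
    (P : (G → ℝ) → G → ℝ)
    (hP : ∀ (g : G → ℝ) (x : G), P g x = ∑' y : G, g y * μ (y⁻¹ * x))
    (T : ℝ → ℝ)
    (hT : ∀ u : ℝ, T u = 1 - ∑' k : ℕ, c k * min 1 (u / (Nat.card (H k) : ℝ))) :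
    (∀ U : Finset G, U.Nonempty → ∀ f : G → ℝ, (∀ x ∉ U, f x = 0) →
        T (U.card : ℝ) * ∑' x : G, (f x) ^ 2 ≤ ∑' x : G, (f x - P f x) * f x) ∧
    (∀ U : Finset G, U.Nonempty → T (U.card : ℝ) ≤ lamOne P U) ∧
    (∀ v : ℝ, 1 ≤ v → T v ≤ isoProfile P v) := by
  have hcs : Summable c := by
    by_contra h
    simp [tsum_eq_zero_of_not_summable h] at hcsum
  have hc0 : ∀ k, 0 ≤ c k := fun k => (hc k).le
  have hμ_eq : ∀ x, μ x = ∑' k, c k * uniformDensity (H k) x := fun x =>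
    (hμ x).trans (tsum_congr fun k => by rw [hm]; rfl)
  have hμ0 : ∀ x, 0 ≤ μ x := fun x =>
    (hμ_eq x) ▸ tsum_nonneg fun k => mul_nonneg (hc0 k) (uniformDensity_nonneg _ _)
  have hsum_le : ∀ (U : Finset G) (g : G → G), Set.InjOn g U →
      ∑ y ∈ U, μ (g y) ≤ 1 - T U.card := fun U g hg => by
    simpa only [hT, sub_sub_cancel, hμ_eq, SetLike.coe_sort_coe] using
      sum_tsum_mul_uniformDensity_le (fun k => (H k : Set G)) hc0 hcs U hg
  have energy : ∀ U : Finset G, ∀ f : G → ℝ, (∀ x ∉ U, f x = 0) →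
      T U.card * ∑' x, f x ^ 2 ≤ ∑' x, (f x - P f x) * f x := fun U f hf => by
    simpa only [sub_sub_cancel] using mul_tsum_sq_le_tsum_sub_conv_mul hμ0 hP
      (fun x _ => hsum_le U _ fun y _ z _ h => inv_injective (mul_right_cancel h))
      (fun y _ => hsum_le U _ fun x _ z _ h => mul_left_cancel h) hf
  have hlam : ∀ U : Finset G, U.Nonempty → T U.card ≤ lamOne P U := fun U hU =>
    le_lamOne hU (energy U)
  refine ⟨fun U _ => energy U, hlam, fun v hv => le_isoProfile P hv fun U hU hUv => ?_⟩
  refine le_trans ?_ (hlam U hU)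
  rw [hT, hT]
  exact sub_le_sub_left (tsum_mul_min_one_div_mono hc0 hcs _ U.card.cast_nonneg hUv) 1

/-- Theorem 6.2: for every nonempty finite `U ⊆ G`, `λ₁(U) ≥ T(|U|)`, i.e. for
every `f` supported in `U`, `((I-P)f, f) ≥ T(|U|)·‖f‖²`, where
`T(u) = 1 - ∑_k c_k min(1, u/|G_k|)`. Consequently `Λ(v) ≥ T(v)` for `v ≥ 1`. -/
theorem stmt_13 {G : Type*} [Group G]
    (H : ℕ → Subgroup G) (hfin : ∀ k, (H k : Set G).Finite)
    (hlt : ∀ k, H k < H (k + 1)) (hunion : ∀ x : G, ∃ k, x ∈ H k)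
    (c : ℕ → ℝ) (hc : ∀ k, 0 < c k) (hcsum : ∑' k : ℕ, c k = 1)
    (m : ℕ → G → ℝ)
    (hm : ∀ (k : ℕ) (x : G),
      m k x = if x ∈ H k then ((Nat.card (H k) : ℝ))⁻¹ else 0)
    (μ : G → ℝ) (hμ : ∀ x : G, μ x = ∑' k : ℕ, c k * m k x)
    (P : (G → ℝ) → G → ℝ)
    (hP : ∀ (g : G → ℝ) (x : G), P g x = ∑' y : G, g y * μ (y⁻¹ * x))
    (T : ℝ → ℝ)
    (hT : ∀ u : ℝ, T u = 1 - ∑' k : ℕ, c k * min 1 (u / (Nat.card (H k) : ℝ))) :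
    (∀ U : Finset G, U.Nonempty → ∀ f : G → ℝ, (∀ x ∉ U, f x = 0) →
        T (U.card : ℝ) * ∑' x : G, (f x) ^ 2 ≤ ∑' x : G, (f x - P f x) * f x) ∧
    (∀ U : Finset G, U.Nonempty → T (U.card : ℝ) ≤ lamOne P U) ∧
    (∀ v : ℝ, 1 ≤ v → T v ≤ isoProfile P v) :=
  stmt_13_general H c hc hcsum m hm μ hμ P hP T hT
end

section
/- For every k ≥ 0, λ₁(G_k) = T(|G_k|) = Σ_{i>k} c_i (1 − |G_k|/|G_i|); moreover σ(k)/2 < λ₁(G_k) < σ(k). -/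
/-!
On functions supported on `G_k`, the form of `I - P` is `‖f‖² - ∑ cᵢ ⟨f * mᵢ, f⟩`. For `i ≤ k`,
`mᵢ` is a probability density, so Schur's test gives `⟨f * mᵢ, f⟩ ≤ ‖f‖²`. For `i ≥ k` the
kernel `mᵢ(y⁻¹x)` is the constant `1/|G_i|` on `G_k × G_k`, so
`⟨f * mᵢ, f⟩ = (∑ f)² / |G_i| ≤ (|G_k| / |G_i|) ‖f‖²` by Cauchy–Schwarz. The indicator of `G_k`
attains both bounds, hence `λ₁(G_k) = 1 - ∑ cᵢ min(1, |G_k|/|G_i|) = T(|G_k|)`. The bounds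
`σ(k)/2 < T(|G_k|) < σ(k)` follow from `0 < |G_k| / |G_{k+1+j}| ≤ 2^{-(j+1)}`.
-/

open scoped BigOperators Classical

open Finset

noncomputable def unifDensity {G : Type*} [Group G] (K : Subgroup G) (x : G) : ℝ :=
  if x ∈ K then (Nat.card K : ℝ)⁻¹ else 0

/-- `convForm w U f = ⟨f * w, f⟩` in `ℓ²(G)` when `f` is supported on `U`. -/
def convForm {G : Type*} [Group G] (w : G → ℝ) (U : Finset G) (f : G → ℝ) : ℝ :=
  ∑ x ∈ U, ∑ y ∈ U, f x * f y * w (y⁻¹ * x)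

section

variable {α : Type*}

lemma sum_sq_pos {U : Finset α} {f : α → ℝ} (hf : ∀ x ∉ U, f x = 0) (hf0 : f ≠ 0) :
    0 < ∑ x ∈ U, f x ^ 2 := by
  obtain ⟨x, hx⟩ := Function.ne_iff.mp hf0
  have hxU : x ∈ U := by by_contra h; exact hx (hf x h)
  exact (sq_pos_of_ne_zero hx).trans_le (single_le_sum (fun y _ => sq_nonneg (f y)) hxU)

lemma sum_indicator_one (U : Finset α) :
    ∑ x ∈ U, (U : Set α).indicator (1 : α → ℝ) x = U.card := by
  rw [sum_congr rfl fun x hx => Set.indicator_of_mem (mem_coe.mpr hx) _]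
  simp

lemma sum_sq_indicator_one (U : Finset α) :
    ∑ x ∈ U, (U : Set α).indicator (1 : α → ℝ) x ^ 2 = U.card := by
  rw [sum_congr rfl fun x hx => by rw [Set.indicator_of_mem (mem_coe.mpr hx)]]
  simp

end

section

variable {G : Type*} [Group G]

lemma convForm_const_mul (r : ℝ) (w : G → ℝ) (U : Finset G) (f : G → ℝ) :
    convForm (fun z => r * w z) U f = r * convForm w U f := by
  simp only [convForm, mul_sum]
  exact sum_congr rfl fun x _ => sum_congr rfl fun y _ => by ring

lemma hasSum_convForm {a : ℕ → G → ℝ} (ha : ∀ z, Summable (a · z)) (U : Finset G)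
    (f : G → ℝ) :
    HasSum (fun i => convForm (a i) U f) (convForm (fun z => ∑' i, a i z) U f) :=
  hasSum_sum fun x _ => hasSum_sum fun y _ => (ha (y⁻¹ * x)).hasSum.mul_left (f x * f y)

lemma sum_comp_mul_left_le_one {w : G → ℝ} (hw : ∀ S : Finset G, ∑ z ∈ S, w z ≤ 1)
    (U : Finset G) (y : G) : ∑ x ∈ U, w (y⁻¹ * x) ≤ 1 := by
  rw [← sum_image fun _ _ _ _ h => mul_left_cancel h]
  exact hw _

lemma sum_comp_inv_mul_le_one {w : G → ℝ} (hw : ∀ S : Finset G, ∑ z ∈ S, w z ≤ 1)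
    (U : Finset G) (x : G) : ∑ y ∈ U, w (y⁻¹ * x) ≤ 1 := by
  rw [← sum_image fun _ _ _ _ h => inv_injective (mul_right_cancel h)]
  exact hw _

/-- Schur's test: convolution by a sub-probability density is a contraction of `ℓ²`. -/
lemma convForm_le_sum_sq {w : G → ℝ} (hw0 : ∀ z, 0 ≤ w z)
    (hw1 : ∀ S : Finset G, ∑ z ∈ S, w z ≤ 1) (U : Finset G) (f : G → ℝ) :
    convForm w U f ≤ ∑ x ∈ U, f x ^ 2 :=
  calc convForm w U f
      ≤ ∑ x ∈ U, ∑ y ∈ U, (f x ^ 2 / 2 * w (y⁻¹ * x) + f y ^ 2 / 2 * w (y⁻¹ * x)) :=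
        sum_le_sum fun x _ => sum_le_sum fun y _ => by
          nlinarith [mul_nonneg (sq_nonneg (f x - f y)) (hw0 (y⁻¹ * x))]
    _ = ∑ x ∈ U, f x ^ 2 / 2 * ∑ y ∈ U, w (y⁻¹ * x)
          + ∑ y ∈ U, f y ^ 2 / 2 * ∑ x ∈ U, w (y⁻¹ * x) := by
        simp only [sum_add_distrib, mul_sum]
        rw [sum_comm (s := U) (t := U) (f := fun x y => f y ^ 2 / 2 * w (y⁻¹ * x))]
    _ ≤ ∑ x ∈ U, f x ^ 2 / 2 * 1 + ∑ y ∈ U, f y ^ 2 / 2 * 1 := by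
        gcongr with x _ y _
        · exact sum_comp_inv_mul_le_one hw1 U x
        · exact sum_comp_mul_left_le_one hw1 U y
    _ = ∑ x ∈ U, f x ^ 2 := by rw [← sum_add_distrib]; exact sum_congr rfl fun x _ => by ring

lemma energy_eq_sum_sq_sub_convForm {P : (G → ℝ) → G → ℝ} {μ : G → ℝ}
    (hP : ∀ (g : G → ℝ) (x : G), P g x = ∑' y : G, g y * μ (y⁻¹ * x))
    {U : Finset G} {f : G → ℝ} (hf : ∀ x ∉ U, f x = 0) :
    ∑' x, (f x - P f x) * f x = ∑ x ∈ U, f x ^ 2 - convForm μ U f := by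
  have hPf : ∀ x, P f x = ∑ y ∈ U, f y * μ (y⁻¹ * x) := fun x => by
    rw [hP]; exact tsum_eq_sum fun y hy => by rw [hf y hy, zero_mul]
  rw [tsum_eq_sum fun x hx => by rw [hf x hx, mul_zero], convForm, ← sum_sub_distrib]
  refine sum_congr rfl fun x _ => ?_
  rw [hPf, sub_mul, sum_mul, sq]
  congr 1
  exact sum_congr rfl fun y _ => by ring

lemma lamOne_eq_one_sub_tsum {P : (G → ℝ) → G → ℝ} {μ : G → ℝ}
    (hP : ∀ (g : G → ℝ) (x : G), P g x = ∑' y : G, g y * μ (y⁻¹ * x))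
    {U : Finset G} {a : ℕ → G → ℝ} (hμ : ∀ z, μ z = ∑' i, a i z)
    (ha : ∀ z, Summable (a · z)) {ρ : ℕ → ℝ} (hρ : Summable ρ)
    (hle : ∀ i f, convForm (a i) U f ≤ ρ i * ∑ x ∈ U, f x ^ 2)
    {f₀ : G → ℝ} (hf₀ : ∀ x ∉ U, f₀ x = 0) (hf₀0 : f₀ ≠ 0)
    (heq : ∀ i, convForm (a i) U f₀ = ρ i * ∑ x ∈ U, f₀ x ^ 2) :
    lamOne P U = 1 - ∑' i, ρ i := by
  have hquot : ∀ f : G → ℝ, (∀ x ∉ U, f x = 0) → f ≠ 0 →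
      (∑' x, (f x - P f x) * f x) / ∑' x, f x ^ 2
        = 1 - (∑' i, convForm (a i) U f) / ∑ x ∈ U, f x ^ 2 := fun f hf hf0 => by
    rw [energy_eq_sum_sq_sub_convForm hP hf, tsum_eq_sum fun x hx => by rw [hf x hx]; ring,
      funext hμ, ← (hasSum_convForm ha U f).tsum_eq, sub_div, div_self (sum_sq_pos hf hf0).ne']
  refine IsLeast.csInf_eq ⟨⟨f₀, hf₀, hf₀0, ?_⟩, ?_⟩
  · rw [hquot f₀ hf₀ hf₀0, tsum_congr heq, tsum_mul_right,
      mul_div_cancel_right₀ _ (sum_sq_pos hf₀ hf₀0).ne']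
  · rintro r ⟨f, hf, hf0, rfl⟩
    rw [hquot f hf hf0, sub_le_sub_iff_left, div_le_iff₀ (sum_sq_pos hf hf0), ← tsum_mul_right]
    exact ((hasSum_convForm ha U f).summable).tsum_le_tsum (hle · f) (hρ.mul_right _)

end

section

variable {G : Type*} [Group G]

lemma unifDensity_nonneg (K : Subgroup G) (x : G) : 0 ≤ unifDensity K x := by
  unfold unifDensity; positivity

lemma unifDensity_le_one (K : Subgroup G) [Finite K] (x : G) : unifDensity K x ≤ 1 := by
  unfold unifDensity
  split_ifs
  · exact inv_le_one_of_one_le₀ (by exact_mod_cast Nat.card_pos)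
  · exact zero_le_one

lemma sum_unifDensity (K : Subgroup G) (S : Finset G) :
    ∑ z ∈ S, unifDensity K z = (S.filter (· ∈ K)).card / Nat.card K := by
  simp only [unifDensity]
  rw [← sum_filter, sum_const, nsmul_eq_mul, div_eq_mul_inv]

lemma coe_filter_mem (K : Subgroup G) (S : Finset G) :
    ((S.filter (· ∈ K) : Finset G) : Set G) = (S : Set G) ∩ K := by
  ext; simp

lemma sum_unifDensity_le_one (K : Subgroup G) [Finite K] (S : Finset G) :
    ∑ z ∈ S, unifDensity K z ≤ 1 := by
  rw [sum_unifDensity, div_le_one (by exact_mod_cast Nat.card_pos)]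
  rw [← Set.ncard_coe_finset, coe_filter_mem, ← SetLike.coe_sort_coe, Nat.card_coe_set_eq]
  exact_mod_cast Set.ncard_le_ncard Set.inter_subset_right (Set.toFinite _)

lemma sum_unifDensity_eq_one (K : Subgroup G) [Finite K] {S : Finset G}
    (hKS : (K : Set G) ⊆ S) : ∑ z ∈ S, unifDensity K z = 1 := by
  rw [sum_unifDensity, div_eq_one_iff_eq (by exact_mod_cast Nat.card_pos.ne'),
    ← Set.ncard_coe_finset, coe_filter_mem, Set.inter_eq_right.mpr hKS,
    ← SetLike.coe_sort_coe, Nat.card_coe_set_eq]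

lemma convForm_unifDensity_of_subset {K : Subgroup G} {U : Finset G} (hUK : (U : Set G) ⊆ K)
    (f : G → ℝ) : convForm (unifDensity K) U f = (∑ x ∈ U, f x) ^ 2 / Nat.card K := by
  have hmem : ∀ x ∈ U, ∀ y ∈ U, y⁻¹ * x ∈ K := fun x hx y hy =>
    K.mul_mem (K.inv_mem (hUK hy)) (hUK hx)
  rw [sq, sum_mul_sum, sum_div, convForm]
  refine sum_congr rfl fun x hx => ?_
  rw [sum_div]
  exact sum_congr rfl fun y hy => by rw [unifDensity, if_pos (hmem x hx y hy), div_eq_mul_inv]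

lemma card_eq_of_coe_eq {L : Subgroup G} {U : Finset G} (hU : (U : Set G) = L) :
    U.card = Nat.card L := by
  rw [← SetLike.coe_sort_coe, ← hU, Nat.card_coe_set_eq, Set.ncard_coe_finset]

lemma finite_of_coe_eq {L : Subgroup G} {U : Finset G} (hU : (U : Set G) = L) : Finite L := by
  rw [← SetLike.coe_sort_coe, ← hU]; infer_instance

lemma sum_inv_mul_eq_sum {L : Subgroup G} {U : Finset G} (hU : (U : Set G) = L) {x : G}
    (hx : x ∈ U) (w : G → ℝ) : ∑ y ∈ U, w (y⁻¹ * x) = ∑ z ∈ U, w z := by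
  have hmem : ∀ a, a ∈ U ↔ a ∈ L := fun a => by rw [← mem_coe, hU, SetLike.mem_coe]
  rw [hmem] at hx
  refine sum_nbij' (fun y => y⁻¹ * x) (fun z => x * z⁻¹) (fun y hy => ?_) (fun z hz => ?_)
    (fun y _ => by group) (fun z _ => by group) fun _ _ => rfl
  · rw [hmem] at hy ⊢; exact L.mul_mem (L.inv_mem hy) hx
  · rw [hmem] at hz ⊢; exact L.mul_mem hx (L.inv_mem hz)

lemma convForm_indicator_one (w : G → ℝ) (U : Finset G) :
    convForm w U ((U : Set G).indicator 1) = ∑ x ∈ U, ∑ y ∈ U, w (y⁻¹ * x) :=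
  sum_congr rfl fun x hx => sum_congr rfl fun y hy => by
    simp [Set.indicator_of_mem (mem_coe.mpr hx), Set.indicator_of_mem (mem_coe.mpr hy)]

lemma min_one_card_div_card_of_le {K L : Subgroup G} [Finite L] (h : K ≤ L) :
    min 1 ((Nat.card L : ℝ) / Nat.card K) = 1 := by
  have : Finite K := Finite.of_injective _ (Subgroup.inclusion_injective h)
  exact min_eq_left ((one_le_div (by exact_mod_cast Nat.card_pos)).mpr
    (by exact_mod_cast Subgroup.card_le_of_le h))

lemma min_one_card_div_card_of_ge {K L : Subgroup G} [Finite K] (h : L ≤ K) :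
    min 1 ((Nat.card L : ℝ) / Nat.card K) = Nat.card L / Nat.card K :=
  min_eq_right ((div_le_one (by exact_mod_cast Nat.card_pos)).mpr
    (by exact_mod_cast Subgroup.card_le_of_le h))

variable {K L : Subgroup G} [Finite K] {U : Finset G}

lemma convForm_unifDensity_le (hU : (U : Set G) = L) (hKL : K ≤ L ∨ L ≤ K) (f : G → ℝ) :
    convForm (unifDensity K) U f
      ≤ min 1 ((Nat.card L : ℝ) / Nat.card K) * ∑ x ∈ U, f x ^ 2 := by
  rcases hKL with hKL | hLK
  · have : Finite L := finite_of_coe_eq hU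
    rw [min_one_card_div_card_of_le hKL, one_mul]
    exact convForm_le_sum_sq (unifDensity_nonneg K)
      (sum_unifDensity_le_one K) U f
  · rw [min_one_card_div_card_of_ge hLK, convForm_unifDensity_of_subset (hU ▸ hLK),
      ← card_eq_of_coe_eq hU, div_mul_eq_mul_div]
    gcongr
    exact sq_sum_le_card_mul_sum_sq

lemma convForm_unifDensity_indicator (hU : (U : Set G) = L) (hKL : K ≤ L ∨ L ≤ K) :
    convForm (unifDensity K) U ((U : Set G).indicator 1)
      = min 1 ((Nat.card L : ℝ) / Nat.card K) * Nat.card L := by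
  rcases hKL with hKL | hLK
  · have : Finite L := finite_of_coe_eq hU
    have hrow : ∀ x ∈ U, ∑ y ∈ U, unifDensity K (y⁻¹ * x) = 1 := fun x hx => by
      rw [sum_inv_mul_eq_sum hU hx, sum_unifDensity_eq_one K (hU ▸ hKL : (K : Set G) ⊆ U)]
    rw [min_one_card_div_card_of_le hKL, one_mul, convForm_indicator_one, ← card_eq_of_coe_eq hU,
      card_eq_sum_ones, Nat.cast_sum]
    exact sum_congr rfl fun x hx => by rw [hrow x hx, Nat.cast_one]
  · rw [min_one_card_div_card_of_ge hLK, convForm_unifDensity_of_subset (hU ▸ hLK),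
      ← card_eq_of_coe_eq hU, sum_indicator_one]
    ring

end

lemma one_sub_tsum_mul_eq_tsum_nat_add {c ρ : ℕ → ℝ} (hc : HasSum c 1)
    (hcρ : Summable fun i => c i * ρ i) {k : ℕ} (hρk : ∀ i ≤ k, ρ i = 1) :
    1 - ∑' i, c i * ρ i = ∑' j, c (k + 1 + j) * (1 - ρ (k + 1 + j)) := by
  have hs : Summable fun i => c i * (1 - ρ i) :=
    (hc.summable.sub hcρ).congr fun i => by ring
  calc 1 - ∑' i, c i * ρ i = ∑' i, c i * (1 - ρ i) := by
        rw [← (hc.sub hcρ.hasSum).tsum_eq]; exact tsum_congr fun i => by ring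
    _ = ∑' j, c (j + (k + 1)) * (1 - ρ (j + (k + 1))) := by
        rw [← hs.sum_add_tsum_nat_add (k + 1), sum_eq_zero fun i hi => by
          rw [hρk i (Nat.lt_succ_iff.mp (mem_range.mp hi)), sub_self, mul_zero], zero_add]
    _ = _ := tsum_congr fun j => by rw [add_comm j]

section

variable {a r : ℕ → ℝ}

lemma summable_mul_one_sub (ha : ∀ j, 0 ≤ a j) (hs : Summable a) (hr0 : ∀ j, 0 ≤ r j)
    (hr1 : ∀ j, r j ≤ 1) : Summable fun j => a j * (1 - r j) :=
  hs.of_nonneg_of_le (fun j => mul_nonneg (ha j) (by linarith [hr1 j]))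
    fun j => mul_le_of_le_one_right (ha j) (by linarith [hr0 j])

lemma tsum_mul_one_sub_lt_tsum (ha : ∀ j, 0 < a j) (hs : Summable a)
    (hr0 : ∀ j, 0 < r j) (hr1 : ∀ j, r j ≤ 1) :
    ∑' j, a j * (1 - r j) < ∑' j, a j :=
  Summable.tsum_lt_tsum (i := 0)
    (fun j => mul_le_of_le_one_right (ha j).le (by linarith [hr0 j]))
    (mul_lt_of_lt_one_right (ha 0) (by linarith [hr0 0]))
    (summable_mul_one_sub (ha · |>.le) hs (hr0 · |>.le) hr1) hs

lemma half_tsum_lt_tsum_mul_one_sub (ha : ∀ j, 0 < a j) (hs : Summable a)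
    (hr0 : ∀ j, 0 ≤ r j) (hr : ∀ j, r j ≤ 1 / 2) (hr1 : r 1 < 1 / 2) :
    (∑' j, a j) / 2 < ∑' j, a j * (1 - r j) := by
  rw [div_eq_mul_one_div, ← tsum_mul_right]
  exact Summable.tsum_lt_tsum (i := 1)
    (fun j => mul_le_mul_of_nonneg_left (by linarith [hr j]) (ha j).le)
    (mul_lt_mul_of_pos_left (by linarith) (ha 1)) (hs.mul_right _)
    (summable_mul_one_sub (ha · |>.le) hs hr0 fun j => (hr j).trans (by norm_num))

end

section

variable {G : Type*} [Group G]

lemma two_mul_card_le_card_of_lt {H K : Subgroup G} [Finite K] (h : H < K) :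
    2 * Nat.card H ≤ Nat.card K := by
  obtain ⟨d, hd⟩ := Subgroup.card_dvd_of_le h.le
  have hK : 0 < Nat.card K := Nat.card_pos
  have hd2 : d ≠ 0 ∧ d ≠ 1 := by
    refine ⟨by rintro rfl; simp_all, ?_⟩
    rintro rfl
    exact h.ne (Subgroup.eq_of_le_of_card_ge h.le (by rw [hd, mul_one]))
  rw [hd, mul_comm]
  exact Nat.mul_le_mul_left _ (by omega)

lemma pow_two_mul_card_le {H : ℕ → Subgroup G} [∀ i, Finite (H i)]
    (hlt : ∀ i, H i < H (i + 1)) (i n : ℕ) :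
    2 ^ n * Nat.card (H i) ≤ Nat.card (H (i + n)) := by
  induction n with
  | zero => simp
  | succ n ih =>
    rw [pow_succ, mul_comm _ 2, mul_assoc, ← add_assoc]
    exact (Nat.mul_le_mul_left 2 ih).trans (two_mul_card_le_card_of_lt (hlt _))

lemma card_div_card_le {H : ℕ → Subgroup G} [∀ i, Finite (H i)]
    (hlt : ∀ i, H i < H (i + 1)) (k j : ℕ) :
    (Nat.card (H k) : ℝ) / Nat.card (H (k + 1 + j)) ≤ (1 / 2) ^ (j + 1) := by
  rw [div_le_iff₀ (by exact_mod_cast Nat.card_pos), one_div, inv_pow, inv_mul_eq_div,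
    le_div_iff₀ (by positivity), mul_comm, show k + 1 + j = k + (j + 1) by omega]
  exact_mod_cast pow_two_mul_card_le hlt k (j + 1)

end


lemma summable_mul_min_one {c x : ℕ → ℝ} (hc0 : ∀ i, 0 ≤ c i) (hc : Summable c)
    (hx : ∀ i, 0 ≤ x i) : Summable fun i => c i * min 1 (x i) :=
  hc.of_nonneg_of_le (fun i => mul_nonneg (hc0 i) (le_min zero_le_one (hx i)))
    fun i => mul_le_of_le_one_right (hc0 i) (min_le_left _ _)

section

variable {G : Type*} [Group G] {H : ℕ → Subgroup G} [∀ i, Finite (H i)] {c : ℕ → ℝ}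

lemma lamOne_eq_one_sub_tsum_mul_min (hH : Monotone H) (hc0 : ∀ i, 0 ≤ c i) (hc : Summable c)
    {μ : G → ℝ} (hμ : ∀ z, μ z = ∑' i, c i * unifDensity (H i) z)
    {P : (G → ℝ) → G → ℝ}
    (hP : ∀ (g : G → ℝ) (x : G), P g x = ∑' y : G, g y * μ (y⁻¹ * x))
    {k : ℕ} {U : Finset G} (hU : (U : Set G) = H k) :
    lamOne P U = 1 - ∑' i, c i * min 1 ((Nat.card (H k) : ℝ) / Nat.card (H i)) := by
  have hcomp : ∀ i, H i ≤ H k ∨ H k ≤ H i := fun i => (le_total i k).imp (hH ·) (hH ·)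
  have h1 : (1 : G) ∈ U := by rw [← mem_coe, hU]; exact (H k).one_mem
  refine lamOne_eq_one_sub_tsum hP hμ (fun z => ?_) (summable_mul_min_one hc0 hc fun i => ?_)
    (fun i f => ?_) (f₀ := (U : Set G).indicator 1)
    (fun x hx => Set.indicator_of_notMem (mt mem_coe.mp hx) _)
    (fun h => by simpa [h1] using congrFun h 1) fun i => ?_
  · exact hc.of_nonneg_of_le (fun i => mul_nonneg (hc0 i) (unifDensity_nonneg _ _))
      fun i => mul_le_of_le_one_right (hc0 i) (unifDensity_le_one _ _)
  · positivity
  · rw [convForm_const_mul, mul_assoc]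
    exact mul_le_mul_of_nonneg_left (convForm_unifDensity_le hU (hcomp i) f) (hc0 i)
  · rw [convForm_const_mul, convForm_unifDensity_indicator hU (hcomp i), sum_sq_indicator_one,
      card_eq_of_coe_eq hU, mul_assoc]

lemma one_sub_tsum_mul_min_eq_tsum (hH : Monotone H) (hc0 : ∀ i, 0 ≤ c i) (hc : HasSum c 1)
    (k : ℕ) :
    1 - ∑' i, c i * min 1 ((Nat.card (H k) : ℝ) / Nat.card (H i))
      = ∑' j, c (k + 1 + j) * (1 - (Nat.card (H k) : ℝ) / Nat.card (H (k + 1 + j))) := by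
  rw [one_sub_tsum_mul_eq_tsum_nat_add hc
    (summable_mul_min_one hc0 hc.summable fun i => by positivity)
    fun i hi => min_one_card_div_card_of_le (hH hi)]
  exact tsum_congr fun j => by rw [min_one_card_div_card_of_ge (hH (by omega))]

lemma tsum_mul_one_sub_card_div_mem_Ioo (hlt : ∀ i, H i < H (i + 1)) (hc : ∀ i, 0 < c i)
    (hcs : Summable c) (k : ℕ) :
    ∑' j, c (k + 1 + j) * (1 - (Nat.card (H k) : ℝ) / Nat.card (H (k + 1 + j)))
      ∈ Set.Ioo ((∑' j, c (k + 1 + j)) / 2) (∑' j, c (k + 1 + j)) := by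
  have hr : ∀ j, (Nat.card (H k) : ℝ) / Nat.card (H (k + 1 + j)) ≤ (1 / 2) ^ (j + 1) :=
    card_div_card_le hlt k
  have hr0 : ∀ j, 0 < (Nat.card (H k) : ℝ) / Nat.card (H (k + 1 + j)) := fun j =>
    div_pos (by exact_mod_cast Nat.card_pos) (by exact_mod_cast Nat.card_pos)
  have hcs' : Summable fun j => c (k + 1 + j) := hcs.comp_injective (add_right_injective _)
  constructor
  · exact half_tsum_lt_tsum_mul_one_sub (hc <| k + 1 + ·) hcs' (hr0 · |>.le)
      (fun j => (hr j).trans (pow_le_of_le_one (by norm_num) (by norm_num) (by omega)))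
      ((hr 1).trans_lt (by norm_num))
  · exact tsum_mul_one_sub_lt_tsum (hc <| k + 1 + ·) hcs' hr0
      fun j => (hr j).trans (pow_le_one₀ (by norm_num) (by norm_num))

end

theorem stmt_14_general {G : Type*} [Group G]
    (H : ℕ → Subgroup G) (hfin : ∀ k, (H k : Set G).Finite)
    (hlt : ∀ k, H k < H (k + 1))
    (c : ℕ → ℝ) (hc : ∀ k, 0 < c k) (hcsum : ∑' k : ℕ, c k = 1)
    (m : ℕ → G → ℝ)
    (hm : ∀ (k : ℕ) (x : G),
      m k x = if x ∈ H k then ((Nat.card (H k) : ℝ))⁻¹ else 0)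
    (μ : G → ℝ) (hμ : ∀ x : G, μ x = ∑' k : ℕ, c k * m k x)
    (σ : ℕ → ℝ) (hσ : ∀ k, σ k = ∑' i : ℕ, c (k + 1 + i))
    (P : (G → ℝ) → G → ℝ)
    (hP : ∀ (g : G → ℝ) (x : G), P g x = ∑' y : G, g y * μ (y⁻¹ * x))
    (T : ℝ → ℝ)
    (hT : ∀ u : ℝ, T u = 1 - ∑' k : ℕ, c k * min 1 (u / (Nat.card (H k) : ℝ))) :
    ∀ k : ℕ,
      lamOne P (hfin k).toFinset = T (Nat.card (H k) : ℝ) ∧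
      T (Nat.card (H k) : ℝ) =
        ∑' i : ℕ, c (k + 1 + i) *
          (1 - (Nat.card (H k) : ℝ) / (Nat.card (H (k + 1 + i)) : ℝ)) ∧
      σ k / 2 < lamOne P (hfin k).toFinset ∧
      lamOne P (hfin k).toFinset < σ k := by
  have : ∀ k, Finite (H k) := fun k => (hfin k).to_subtype
  have hcs : Summable c := by
    by_contra h
    simp [tsum_eq_zero_of_not_summable h] at hcsum
  have hmono : Monotone H := monotone_nat_of_le_succ fun i => (hlt i).le
  intro k
  have hlam : lamOne P (hfin k).toFinset = T (Nat.card (H k)) := by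
    rw [hT]
    exact lamOne_eq_one_sub_tsum_mul_min hmono (hc · |>.le) hcs
      (fun x => (hμ x).trans (tsum_congr fun i => by rw [hm]; rfl)) hP (hfin k).coe_toFinset
  have htail : T (Nat.card (H k)) = ∑' i : ℕ, c (k + 1 + i) *
      (1 - (Nat.card (H k) : ℝ) / (Nat.card (H (k + 1 + i)) : ℝ)) := by
    rw [hT]
    exact one_sub_tsum_mul_min_eq_tsum hmono (hc · |>.le) (hcsum ▸ hcs.hasSum) k
  obtain ⟨hlo, hhi⟩ := tsum_mul_one_sub_card_div_mem_Ioo hlt hc hcs k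
  rw [hσ, hlam, htail]
  exact ⟨rfl, rfl, hlo, hhi⟩

/-- Proposition 6.3: `λ₁(G_k) = T(|G_k|) = ∑_{i>k} c_i (1 - |G_k|/|G_i|)` and
`σ(k)/2 < λ₁(G_k) < σ(k)`. -/
theorem stmt_14 {G : Type*} [Group G]
    (H : ℕ → Subgroup G) (hfin : ∀ k, (H k : Set G).Finite)
    (hlt : ∀ k, H k < H (k + 1)) (hunion : ∀ x : G, ∃ k, x ∈ H k)
    (c : ℕ → ℝ) (hc : ∀ k, 0 < c k) (hcsum : ∑' k : ℕ, c k = 1)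
    (m : ℕ → G → ℝ)
    (hm : ∀ (k : ℕ) (x : G),
      m k x = if x ∈ H k then ((Nat.card (H k) : ℝ))⁻¹ else 0)
    (μ : G → ℝ) (hμ : ∀ x : G, μ x = ∑' k : ℕ, c k * m k x)
    (σ : ℕ → ℝ) (hσ : ∀ k, σ k = ∑' i : ℕ, c (k + 1 + i))
    (P : (G → ℝ) → G → ℝ)
    (hP : ∀ (g : G → ℝ) (x : G), P g x = ∑' y : G, g y * μ (y⁻¹ * x))
    (T : ℝ → ℝ)
    (hT : ∀ u : ℝ, T u = 1 - ∑' k : ℕ, c k * min 1 (u / (Nat.card (H k) : ℝ))) :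
    ∀ k : ℕ,
      lamOne P (hfin k).toFinset = T (Nat.card (H k) : ℝ) ∧
      T (Nat.card (H k) : ℝ) =
        ∑' i : ℕ, c (k + 1 + i) *
          (1 - (Nat.card (H k) : ℝ) / (Nat.card (H (k + 1 + i)) : ℝ)) ∧
      σ k / 2 < lamOne P (hfin k).toFinset ∧
      lamOne P (hfin k).toFinset < σ k :=
  stmt_14_general H hfin hlt c hc hcsum m hm μ hμ σ hσ P hP T hT
end

section
/- Assume Condition (A): there exists λ > 0 such that c_k ≤ λ·σ(k) for all k ≥ 0. Let s : [0,∞) → (0,∞) be any continuous nonincreasing function with s(k) = σ(k) for every integer k ≥ 0. Then the function x ↦ s(log x) is doubling on (1,∞): there exists a constant c > 0 (one may take c = (1+λ)^{−3}) such that for all x > 1, c · s(log x) ≤ s(log(2x)) ≤ s(log x). -/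
/-!
Writing `σ k = c (k+1) + σ (k+1)`, Condition (A) gives `σ k ≤ (1 + λ) σ (k+1)`, so `σ` loses at
most a factor `(1 + λ)` per unit step. Since `log (2x) = log x + log 2` with `log 2 < 1`, the points
`log x` and `log (2x)` lie between `⌊log x⌋` and `⌊log x⌋ + 2`, and monotonicity of `s` gives the
doubling constant `(1 + λ)⁻²`.
-/

open Real Set

theorem tail_le_one_add_mul_tail_succ {c σ : ℕ → ℝ} (hc : Summable c)
    (hσ : ∀ k, σ k = ∑' i : ℕ, c (k + 1 + i)) {lam : ℝ} (hA : ∀ k, c k ≤ lam * σ k) (k : ℕ) :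
    σ k ≤ (1 + lam) * σ (k + 1) := by
  have htail : σ k = c (k + 1) + σ (k + 1) := by
    have hsum : Summable fun i => c (k + 1 + i) := by
      simpa only [add_comm] using (summable_nat_add_iff (k + 1)).2 hc
    rw [hσ, hσ, hsum.tsum_eq_zero_add]
    simp only [add_zero]
    congr 1
    exact tsum_congr fun i => by ring_nf
  linarith [hA (k + 1)]

theorem le_pow_mul_add_of_le_mul_succ {u : ℕ → ℝ} {r : ℝ} (hr : 0 ≤ r)
    (hu : ∀ k, u k ≤ r * u (k + 1)) (n m : ℕ) : u n ≤ r ^ m * u (n + m) := by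
  induction m with
  | zero => simp
  | succ m ih =>
    calc u n ≤ r ^ m * u (n + m) := ih
      _ ≤ r ^ m * (r * u (n + m + 1)) := by gcongr; exact hu _
      _ = r ^ (m + 1) * u (n + (m + 1)) := by ring_nf

theorem AntitoneOn.le_pow_mul_of_le_add_nat {s : ℝ → ℝ} {r : ℝ} (hs : AntitoneOn s (Ici 0))
    (hr : 0 ≤ r) (hsr : ∀ k : ℕ, s k ≤ r * s (k + 1)) {y z : ℝ} (hy : 0 ≤ y) (hyz : y ≤ z)
    (m : ℕ) (hz : z ≤ y + m) : s y ≤ r ^ (m + 1) * s z := by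
  set n := ⌊y⌋₊
  have hiter : s n ≤ r ^ (m + 1) * s ↑(n + (m + 1)) :=
    le_pow_mul_add_of_le_mul_succ (u := fun k : ℕ => s k) hr (by exact_mod_cast hsr) n (m + 1)
  have hz_lt : z ≤ ↑(n + (m + 1)) := by
    push_cast
    linarith [Nat.lt_floor_add_one y]
  calc s y ≤ s n := hs (mem_Ici.2 (Nat.cast_nonneg n)) hy (Nat.floor_le hy)
    _ ≤ r ^ (m + 1) * s ↑(n + (m + 1)) := hiter
    _ ≤ r ^ (m + 1) * s z := by
      gcongr
      exact hs (mem_Ici.2 (hy.trans hyz)) (mem_Ici.2 (Nat.cast_nonneg _)) hz_lt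

theorem stmt_15_general (c : ℕ → ℝ) (hcsum : ∑' k : ℕ, c k = 1)
    (σ : ℕ → ℝ) (hσ : ∀ k, σ k = ∑' i : ℕ, c (k + 1 + i))
    (lam : ℝ) (hlam : 0 < lam) (hA : ∀ k, c k ≤ lam * σ k)
    (s : ℝ → ℝ)
    (hsanti : AntitoneOn s (Set.Ici 0))
    (hsval : ∀ k : ℕ, s k = σ k) :
    ∃ a > (0 : ℝ), ∀ x : ℝ, 1 < x →
      a * s (Real.log x) ≤ s (Real.log (2 * x)) ∧
      s (Real.log (2 * x)) ≤ s (Real.log x) := by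
  have hc : Summable c := by
    by_contra h
    simp [tsum_eq_zero_of_not_summable h] at hcsum
  have hstep : ∀ k : ℕ, s k ≤ (1 + lam) * s (k + 1) := fun k => by
    have := tail_le_one_add_mul_tail_succ hc hσ hA k
    rw [← hsval, ← hsval] at this
    exact_mod_cast this
  refine ⟨((1 + lam) ^ 2)⁻¹, by positivity, fun x hx => ?_⟩
  have hlogx : 0 ≤ log x := (log_pos hx).le
  have hlog2 : 0 < log 2 ∧ log 2 < 1 := ⟨log_pos one_lt_two, log_two_lt_d9.trans (by norm_num)⟩
  rw [log_mul two_ne_zero (by linarith), add_comm (log 2)]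
  constructor
  · rw [inv_mul_le_iff₀ (by positivity)]
    simpa only [Nat.reduceAdd] using hsanti.le_pow_mul_of_le_add_nat (by linarith) hstep hlogx
      (le_add_of_nonneg_right hlog2.1.le) 1 (by push_cast; linarith)
  · exact hsanti hlogx (by simp only [mem_Ici]; linarith) (by linarith)

/-- Proposition 6.5: under Condition (A) (`c_k ≤ λ·σ(k)` for all `k`), any
continuous nonincreasing positive extension `s` of `σ` makes `x ↦ s(log x)`
doubling on `(1,∞)`: there is `a > 0` with
`a·s(log x) ≤ s(log 2x) ≤ s(log x)` for all `x > 1`. -/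
theorem stmt_15 (c : ℕ → ℝ) (hc : ∀ k, 0 < c k) (hcsum : ∑' k : ℕ, c k = 1)
    (σ : ℕ → ℝ) (hσ : ∀ k, σ k = ∑' i : ℕ, c (k + 1 + i))
    (lam : ℝ) (hlam : 0 < lam) (hA : ∀ k, c k ≤ lam * σ k)
    (s : ℝ → ℝ) (hspos : ∀ x ≥ (0 : ℝ), 0 < s x)
    (hscont : ContinuousOn s (Set.Ici 0))
    (hsanti : AntitoneOn s (Set.Ici 0))
    (hsval : ∀ k : ℕ, s k = σ k) :
    ∃ a > (0 : ℝ), ∀ x : ℝ, 1 < x →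
      a * s (Real.log x) ≤ s (Real.log (2 * x)) ∧
      s (Real.log (2 * x)) ≤ s (Real.log x) :=
  stmt_15_general c hcsum σ hσ lam hlam hA s hsanti hsval
end
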